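/- arXiv:2312.14246 — 4 statements merged into one kernel-verified Lean document; each statement's English description precedes it below -/
import Mathlib

section
/- Let μ and ν be two probability measures on [q]^V (V a finite set, q ≥ 1) with common factorization structure with respect to a partition V = S₁ ∪ … ∪ S_Γ and conditioning sets Π₁ = ∅, Π_j ⊆ S₁∪…∪S_{j−1} for 2 ≤ j ≤ Γ. Then d_H²(μ,ν) ≤ Σ_{j=1}^{Γ} d_H²(μ|_{S_j∪Π_j}, ν|_{S_j∪Π_j}). -/
open Finset

/-- Hellinger distance between two probability mass functions on a finite type:
`d_H(p,q) = (∑ₓ (√p(x) − √q(x))²)^{1/2}`. -/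
noncomputable def dH {α : Type*} [Fintype α] (p q : α → ℝ) : ℝ :=
  Real.sqrt (∑ x, (Real.sqrt (p x) - Real.sqrt (q x)) ^ 2)

/-- Marginal of a probability mass function `p` on `[q]^V` on a subset `A ⊆ V`:
the pushforward of `p` under restriction to `A`. -/
noncomputable def marg {V : Type*} [Fintype V] [DecidableEq V] {q : ℕ}
    (p : (V → Fin q) → ℝ) (A : Finset V) : (A → Fin q) → ℝ :=
  fun τ => ∑ σ : V → Fin q, if (∀ a : A, σ a = τ a) then p σ else 0

/-- The factor `μ|_{S}^{σ|_Π}(σ)`: the conditional probability, under `p`, that the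
coordinates in `S` equal `σ|_S` given that the coordinates in `Π` equal `σ|_Π`. -/
noncomputable def condFactor {V : Type*} [Fintype V] [DecidableEq V] {q : ℕ}
    (p : (V → Fin q) → ℝ) (S P : Finset V) (σ : V → Fin q) : ℝ :=
  marg p (S ∪ P) (fun a => σ a) / marg p P (fun a => σ a)

/-- `p` has the factorization structure `p(σ) = ∏_j p|_{S_j}^{σ|_{Π_j}}(σ)`. -/
def HasFactorization {V : Type*} [Fintype V] [DecidableEq V] {q : ℕ}
    (p : (V → Fin q) → ℝ) {Γ : ℕ} (S P : Fin Γ → Finset V) : Prop :=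
  ∀ σ, p σ = ∏ j, condFactor p (S j) (P j) σ

section aux
variable {V : Type*} [Fintype V] [DecidableEq V] {q : ℕ}

/-- restriction of a full configuration -/
def res (A : Finset V) (σ : V → Fin q) : A → Fin q := fun a => σ a

/-- extend a partial configuration by a default value -/
def extd (A : Finset V) (τ : A → Fin q) (d : Fin q) : V → Fin q :=
  fun v => if h : v ∈ A then τ ⟨v, h⟩ else d

/-- override a full configuration on a finset -/
def ovr (C : Finset V) (σ : V → Fin q) (s : C → Fin q) : V → Fin q :=
  fun v => if h : v ∈ C then s ⟨v, h⟩ else σ v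

/-- glue partial configurations on disjoint sets -/
def glue (A C : Finset V) (ρ : A → Fin q) (s : C → Fin q) : (A ∪ C : Finset V) → Fin q :=
  fun x => if h : (x : V) ∈ A then ρ ⟨x, h⟩
    else s ⟨x, (Finset.mem_union.1 x.2).resolve_left h⟩

lemma glue_left (A C : Finset V) (ρ : A → Fin q) (s : C → Fin q) (x : (A ∪ C : Finset V))
    (h : (x : V) ∈ A) : glue A C ρ s x = ρ ⟨x, h⟩ := by
  simp [glue, h]

lemma glue_right (A C : Finset V) (hd : Disjoint A C) (ρ : A → Fin q) (s : C → Fin q)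
    (x : (A ∪ C : Finset V)) (h : (x : V) ∈ C) : glue A C ρ s x = s ⟨x, h⟩ := by
  have hA : (x : V) ∉ A := fun hA => (Finset.disjoint_left.1 hd hA) h
  simp [glue, hA]

/-- the splitting equivalence -/
def splitEquiv (A C : Finset V) (hd : Disjoint A C) :
    ((A ∪ C : Finset V) → Fin q) ≃ ((A → Fin q) × (C → Fin q)) :=
    { toFun := fun τ => (fun a => τ ⟨a, Finset.mem_union_left _ a.2⟩,
        fun c => τ ⟨c, Finset.mem_union_right _ c.2⟩)
      invFun := fun z => glue A C z.1 z.2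
      left_inv := by
        intro τ; funext x
        by_cases h : (x : V) ∈ A
        · simp [glue, h]
        · simp [glue, h]
      right_inv := by
        rintro ⟨ρ, s⟩
        simp only [Prod.mk.injEq]
        constructor
        · funext a; exact glue_left A C ρ s _ a.2
        · funext c; exact glue_right A C hd ρ s _ c.2 }

lemma splitEquiv_symm_apply (A C : Finset V) (hd : Disjoint A C) (ρ : A → Fin q)
    (s : C → Fin q) : (splitEquiv A C hd).symm (ρ, s) = glue A C ρ s := rfl

/-- splitting a sum over configurations on `A ∪ C` -/
lemma sum_glue_split (A C : Finset V) (hd : Disjoint A C)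
    (f : ((A ∪ C : Finset V) → Fin q) → ℝ) :
    ∑ τ, f τ = ∑ ρ : A → Fin q, ∑ s : C → Fin q, f (glue A C ρ s) := by
  rw [← Equiv.sum_comp (splitEquiv A C hd).symm f, Fintype.sum_prod_type]
  simp only [splitEquiv_symm_apply]

lemma marg_nonneg {p : (V → Fin q) → ℝ} (hp : ∀ σ, 0 ≤ p σ) (A : Finset V)
    (τ : A → Fin q) : 0 ≤ marg p A τ := by
  refine Finset.sum_nonneg fun σ _ => ?_
  split <;> simp [hp σ]

lemma marg_sum (p : (V → Fin q) → ℝ) (A : Finset V) :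
    ∑ τ : A → Fin q, marg p A τ = ∑ σ, p σ := by
  classical
  unfold marg
  rw [Finset.sum_comm]
  refine Finset.sum_congr rfl fun σ _ => ?_
  have : ∀ τ : A → Fin q, (∀ a : A, σ a = τ a) ↔ τ = res A σ := by
    intro τ
    constructor
    · intro h; funext a; exact (h a).symm
    · intro h a; rw [h]; rfl
  calc ∑ τ : A → Fin q, (if (∀ a : A, σ a = τ a) then p σ else 0)
      = ∑ τ : A → Fin q, (if τ = res A σ then p σ else 0) := by
        refine Finset.sum_congr rfl fun τ _ => by rw [if_congr (this τ) rfl rfl]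
    _ = p σ := by rw [Finset.sum_ite_eq' Finset.univ (res A σ) (fun _ => p σ)]; simp

lemma marg_glue (A C : Finset V) (hd : Disjoint A C) (p : (V → Fin q) → ℝ) (ρ : A → Fin q) :
    ∑ s : C → Fin q, marg p (A ∪ C) (glue A C ρ s) = marg p A ρ := by
  classical
  unfold marg
  rw [Finset.sum_comm]
  refine Finset.sum_congr rfl fun σ _ => ?_
  have key : ∀ s : C → Fin q,
      (∀ a : (A ∪ C : Finset V), σ a = glue A C ρ s a) ↔
        (s = res C σ ∧ ∀ a : A, σ a = ρ a) := by
    intro s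
    constructor
    · intro h
      constructor
      · funext c
        have := h ⟨c, Finset.mem_union_right _ c.2⟩
        rw [glue_right A C hd ρ s _ c.2] at this
        exact this.symm
      · intro a
        have := h ⟨a, Finset.mem_union_left _ a.2⟩
        rwa [glue_left A C ρ s _ a.2] at this
    · rintro ⟨hs, hA⟩ x
      by_cases h : (x : V) ∈ A
      · rw [glue_left A C ρ s _ h]; exact hA ⟨x, h⟩
      · have hC : (x : V) ∈ C := (Finset.mem_union.1 x.2).resolve_left h
        rw [glue_right A C hd ρ s _ hC, hs]; rfl
  calc ∑ s : C → Fin q, (if (∀ a : (A ∪ C : Finset V), σ a = glue A C ρ s a) then p σ else 0)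
      = ∑ s : C → Fin q, (if s = res C σ then (if (∀ a : A, σ a = ρ a) then p σ else 0) else 0) := by
        refine Finset.sum_congr rfl fun s _ => ?_
        rw [if_congr (key s) rfl rfl]
        by_cases h1 : s = res C σ <;> by_cases h2 : ∀ a : A, σ a = ρ a <;> simp [h1, h2]
    _ = _ := by rw [Finset.sum_ite_eq' Finset.univ (res C σ)]; simp


lemma marg_congr {p : (V → Fin q) → ℝ} {A : Finset V} {σ σ' : V → Fin q}
    (h : ∀ v ∈ A, σ v = σ' v) :
    marg p A (fun a => σ a) = marg p A (fun a => σ' a) := by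
  congr 1; funext a; exact h a a.2

lemma condFactor_nonneg {p : (V → Fin q) → ℝ} (h0 : ∀ σ, 0 ≤ p σ) (S P : Finset V)
    (σ : V → Fin q) : 0 ≤ condFactor p S P σ :=
  div_nonneg (marg_nonneg h0 _ _) (marg_nonneg h0 _ _)

lemma condFactor_congr (p : (V → Fin q) → ℝ) (S P : Finset V) {σ σ' : V → Fin q}
    (h : ∀ v ∈ S ∪ P, σ v = σ' v) : condFactor p S P σ = condFactor p S P σ' := by
  unfold condFactor
  rw [marg_congr h, marg_congr (fun v hv => h v (Finset.mem_union_right _ hv))]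

lemma res_ovr_of_disjoint {A C : Finset V} (hd : Disjoint A C) (σ : V → Fin q)
    (s : C → Fin q) : (fun a : A => ovr C σ s a) = res A σ := by
  funext a
  have : (a : V) ∉ C := fun hc => (Finset.disjoint_left.1 hd a.2) hc
  simp [ovr, res, this]

lemma sum_condFactor (Sk Pk : Finset V) (hd : Disjoint Pk Sk) (p : (V → Fin q) → ℝ)
    (σ₀ : V → Fin q) :
    ∑ s : Sk → Fin q, condFactor p Sk Pk (ovr Sk σ₀ s) =
      if marg p Pk (res Pk σ₀) = 0 then 0 else 1 := by
  unfold condFactor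
  rw [union_comm Sk Pk]
  have hden : ∀ s : Sk → Fin q, (fun a : Pk => ovr Sk σ₀ s a) = res Pk σ₀ :=
    fun s => res_ovr_of_disjoint hd σ₀ s
  have hnum : ∀ s : Sk → Fin q,
      (fun a : (Pk ∪ Sk : Finset V) => ovr Sk σ₀ s a) = glue Pk Sk (res Pk σ₀) s := by
    intro s; funext x
    by_cases h : (x : V) ∈ Pk
    · have hx : (x : V) ∉ Sk := fun hc => (Finset.disjoint_left.1 hd h) hc
      rw [glue_left Pk Sk _ _ _ h]; simp [ovr, hx, res]
    · have hC : (x : V) ∈ Sk := (Finset.mem_union.1 x.2).resolve_left h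
      rw [glue_right Pk Sk hd _ _ _ hC]; simp [ovr, hC]
  calc ∑ s : Sk → Fin q,
        marg p (Pk ∪ Sk) (fun a => ovr Sk σ₀ s a) / marg p Pk (fun a => ovr Sk σ₀ s a)
      = (∑ s : Sk → Fin q, marg p (Pk ∪ Sk) (glue Pk Sk (res Pk σ₀) s)) / marg p Pk (res Pk σ₀) := by
        rw [Finset.sum_div]
        exact Finset.sum_congr rfl fun s _ => by rw [hnum s, hden s]
    _ = marg p Pk (res Pk σ₀) / marg p Pk (res Pk σ₀) := by rw [marg_glue Pk Sk hd]
    _ = _ := by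
        by_cases h : marg p Pk (res Pk σ₀) = 0
        · simp [h]
        · simp [h, div_self h]

lemma marg_glue_eq_zero {Pk Sk : Finset V} (hd : Disjoint Pk Sk) {p : (V → Fin q) → ℝ}
    (h0 : ∀ σ, 0 ≤ p σ) {η : Pk → Fin q} (h : marg p Pk η = 0) (s : Sk → Fin q) :
    marg p (Pk ∪ Sk) (glue Pk Sk η s) = 0 := by
  have hsum := marg_glue Pk Sk hd p η
  rw [h] at hsum
  have := (Finset.sum_eq_zero_iff_of_nonneg
    (fun s _ => marg_nonneg h0 (Pk ∪ Sk) (glue Pk Sk η s))).1 hsum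
  exact this s (Finset.mem_univ s)

lemma marg_empty (p : (V → Fin q) → ℝ) (τ : ((∅ : Finset V) : Finset V) → Fin q) :
    marg p ∅ τ = ∑ σ, p σ := by
  unfold marg
  refine Finset.sum_congr rfl fun σ _ => ?_
  rw [if_pos]
  rintro ⟨a, ha⟩
  exact absurd ha (Finset.notMem_empty a)

lemma marg_univ (p : (V → Fin q) → ℝ) (σ : V → Fin q) :
    marg p (univ : Finset V) (res univ σ) = p σ := by
  unfold marg
  have : ∀ σ' : V → Fin q, (∀ a : (univ : Finset V), σ' a = res univ σ a) ↔ σ' = σ := by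
    intro σ'
    constructor
    · intro h; funext v; exact h ⟨v, Finset.mem_univ v⟩
    · intro h a; rw [h]; rfl
  calc ∑ σ' : V → Fin q, (if (∀ a : (univ : Finset V), σ' a = res univ σ a) then p σ' else 0)
      = ∑ σ' : V → Fin q, (if σ' = σ then p σ' else 0) :=
        Finset.sum_congr rfl fun σ' _ => by rw [if_congr (this σ') rfl rfl]
    _ = p σ := by rw [Finset.sum_ite_eq' Finset.univ σ p]; simp

lemma sum_univ_config (f : (((univ : Finset V) : Finset V) → Fin q) → ℝ) :
    ∑ τ, f τ = ∑ σ : V → Fin q, f (res univ σ) := by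
  rw [← Equiv.sum_comp ((Equiv.arrowCongr
    (Equiv.subtypeUnivEquiv (fun x => Finset.mem_univ x)) (Equiv.refl (Fin q))).symm) f]
  refine Finset.sum_congr rfl fun σ _ => congrArg f ?_
  funext a
  rfl

lemma sum_empty_config (c : ℝ) :
    ∑ _τ : (((∅ : Finset V) : Finset V) → Fin q), c = c := by
  rw [Finset.sum_const]
  have : Fintype.card (((∅ : Finset V) : Finset V) → Fin q) = 1 := by
    rw [Fintype.card_fun]
    simp
  simp [Finset.card_univ, this]


variable {Γ : ℕ}

def Tset (S : Fin Γ → Finset V) (k : ℕ) : Finset V :=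
  (univ.filter (fun i : Fin Γ => (i : ℕ) < k)).biUnion S

noncomputable def Gfun (p : (V → Fin q) → ℝ) (S P : Fin Γ → Finset V) (k : ℕ)
    (σ : V → Fin q) : ℝ :=
  ∏ j ∈ univ.filter (fun j : Fin Γ => (j : ℕ) < k), condFactor p (S j) (P j) σ

lemma Tset_zero (S : Fin Γ → Finset V) : Tset S 0 = ∅ := by
  simp [Tset]

lemma Tset_top (S : Fin Γ → Finset V) (hcover : Finset.univ.biUnion S = (Finset.univ : Finset V)) :
    Tset S Γ = univ := by
  rw [Tset, Finset.filter_true_of_mem (fun i _ => i.2), hcover]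

lemma filter_lt_succ (Γ : ℕ) (k : ℕ) (hk : k < Γ) :
    (univ.filter (fun i : Fin Γ => (i : ℕ) < k + 1)) =
      insert ⟨k, hk⟩ (univ.filter (fun i : Fin Γ => (i : ℕ) < k)) := by
  ext i
  simp only [Finset.mem_filter, Finset.mem_univ, true_and, Finset.mem_insert]
  constructor
  · intro h
    rcases Nat.lt_succ_iff_lt_or_eq.1 h with h' | h'
    · exact Or.inr h'
    · exact Or.inl (Fin.ext h')
  · rintro (h | h)
    · subst h; exact Nat.lt_succ_self k
    · omega

lemma Tset_succ (S : Fin Γ → Finset V) (k : ℕ) (hk : k < Γ) :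
    Tset S (k + 1) = Tset S k ∪ S ⟨k, hk⟩ := by
  rw [Tset, Tset, filter_lt_succ Γ k hk, Finset.biUnion_insert, Finset.union_comm]

lemma Tset_mono (S : Fin Γ → Finset V) {k k' : ℕ} (h : k ≤ k') : Tset S k ⊆ Tset S k' := by
  intro v hv
  rcases Finset.mem_biUnion.1 hv with ⟨i, hi, hvi⟩
  simp only [Finset.mem_filter, Finset.mem_univ, true_and] at hi
  exact Finset.mem_biUnion.2 ⟨i, by simp only [Finset.mem_filter, Finset.mem_univ, true_and]; omega, hvi⟩

lemma S_subset_Tset (S : Fin Γ → Finset V) (j : Fin Γ) (k : ℕ) (h : (j : ℕ) < k) :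
    S j ⊆ Tset S k :=
  Finset.subset_biUnion_of_mem S (by simp [h])

lemma disjoint_Tset_S (S : Fin Γ → Finset V)
    (hdisj : ∀ i j, i ≠ j → Disjoint (S i) (S j)) (k : ℕ) (hk : k < Γ) :
    Disjoint (Tset S k) (S ⟨k, hk⟩) := by
  rw [Tset, Finset.disjoint_biUnion_left]
  intro i hi
  simp only [Finset.mem_filter, Finset.mem_univ, true_and] at hi
  exact hdisj i ⟨k, hk⟩ (by rintro rfl; exact absurd hi (by simp))

lemma P_subset_Tset (S P : Fin Γ → Finset V)
    (hP : ∀ j, P j ⊆ (Finset.univ.filter (fun i => i < j)).biUnion S) (j : Fin Γ) :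
    P j ⊆ Tset S (j : ℕ) := by
  refine (hP j).trans ?_
  rw [Tset]
  refine Finset.biUnion_subset_biUnion_of_subset_left _ ?_
  intro i hi
  simp only [Finset.mem_filter, Finset.mem_univ, true_and] at *
  exact hi

lemma disjoint_P_S (S P : Fin Γ → Finset V)
    (hdisj : ∀ i j, i ≠ j → Disjoint (S i) (S j))
    (hP : ∀ j, P j ⊆ (Finset.univ.filter (fun i => i < j)).biUnion S) (j : Fin Γ) :
    Disjoint (P j) (S j) := by
  refine Finset.disjoint_left.2 fun {v} hv hvS => ?_
  have := P_subset_Tset S P hP j hv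
  rw [Tset] at this
  rcases Finset.mem_biUnion.1 this with ⟨i, hi, hvi⟩
  simp only [Finset.mem_filter, Finset.mem_univ, true_and] at hi
  have hne : i ≠ j := by intro h; rw [h] at hi; omega
  exact Finset.disjoint_left.1 (hdisj i j hne) hvi hvS

lemma Gfun_zero (p : (V → Fin q) → ℝ) (S P : Fin Γ → Finset V) (σ : V → Fin q) :
    Gfun p S P 0 σ = 1 := by
  simp [Gfun]

lemma Gfun_succ (p : (V → Fin q) → ℝ) (S P : Fin Γ → Finset V) (k : ℕ) (hk : k < Γ)
    (σ : V → Fin q) :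
    Gfun p S P (k + 1) σ = Gfun p S P k σ * condFactor p (S ⟨k, hk⟩) (P ⟨k, hk⟩) σ := by
  rw [Gfun, Gfun, filter_lt_succ Γ k hk, Finset.prod_insert (by simp), mul_comm]

lemma Gfun_top (p : (V → Fin q) → ℝ) (S P : Fin Γ → Finset V) (σ : V → Fin q) :
    Gfun p S P Γ σ = ∏ j, condFactor p (S j) (P j) σ := by
  rw [Gfun, Finset.filter_true_of_mem (fun i _ => i.2)]

lemma Gfun_nonneg {p : (V → Fin q) → ℝ} (h0 : ∀ σ, 0 ≤ p σ) (S P : Fin Γ → Finset V)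
    (k : ℕ) (σ : V → Fin q) : 0 ≤ Gfun p S P k σ :=
  Finset.prod_nonneg fun j _ => condFactor_nonneg h0 _ _ _

lemma Gfun_congr (p : (V → Fin q) → ℝ) (S P : Fin Γ → Finset V)
    (hP : ∀ j, P j ⊆ (Finset.univ.filter (fun i => i < j)).biUnion S)
    (k : ℕ) {σ σ' : V → Fin q} (h : ∀ v ∈ Tset S k, σ v = σ' v) :
    Gfun p S P k σ = Gfun p S P k σ' := by
  refine Finset.prod_congr rfl fun j hj => ?_
  simp only [Finset.mem_filter, Finset.mem_univ, true_and] at hj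
  refine condFactor_congr p _ _ fun v hv => ?_
  rcases Finset.mem_union.1 hv with hv' | hv'
  · exact h v (S_subset_Tset S j k hj hv')
  · exact h v ((P_subset_Tset S P hP j).trans (Tset_mono S (by omega)) hv')


lemma extd_glue (A C : Finset V) (hd : Disjoint A C) (τ : A → Fin q) (s : C → Fin q)
    (d : Fin q) :
    extd (A ∪ C) (glue A C τ s) d = ovr C (extd A τ d) s := by
  funext v
  by_cases hC : v ∈ C
  · have hA : v ∉ A := fun h => Finset.disjoint_left.1 hd h hC
    have hm : v ∈ A ∪ C := Finset.mem_union_right _ hC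
    simp only [extd, ovr, dif_pos hm, dif_pos hC]
    exact glue_right A C hd τ s ⟨v, hm⟩ hC
  · by_cases hA : v ∈ A
    · have hm : v ∈ A ∪ C := Finset.mem_union_left _ hA
      simp only [extd, ovr, dif_pos hm, dif_neg hC, dif_pos hA]
      exact glue_left A C τ s ⟨v, hm⟩ hA
    · have hm : v ∉ A ∪ C := by simp [hA, hC]
      simp [extd, ovr, hm, hA, hC]

lemma res_extd (A : Finset V) (τ : A → Fin q) (d : Fin q) :
    res A (extd A τ d) = τ := by
  funext a
  simp [res, extd, a.2]

set_option maxHeartbeats 2000000 in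
lemma claimA (S P : Fin Γ → Finset V)
    (hdisj : ∀ i j, i ≠ j → Disjoint (S i) (S j))
    (hcover : Finset.univ.biUnion S = (Finset.univ : Finset V))
    (hP : ∀ j, P j ⊆ (Finset.univ.filter (fun i => i < j)).biUnion S)
    (p : (V → Fin q) → ℝ) (h0 : ∀ σ, 0 ≤ p σ) (h1 : ∑ σ, p σ = 1)
    (hf : HasFactorization p S P) (d : Fin q) :
    ∀ k, k ≤ Γ → ∀ τ : Tset S k → Fin q,
      marg p (Tset S k) τ = Gfun p S P k (extd (Tset S k) τ d) := by
  -- Part D : pointwise upper bound, downward induction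
  have partD : ∀ dd k, k + dd = Γ → ∀ τ : Tset S k → Fin q,
      marg p (Tset S k) τ ≤ Gfun p S P k (extd (Tset S k) τ d) := by
    intro dd
    induction dd with
    | zero =>
      intro k hk
      have hk' : k = Γ := by omega
      subst hk'
      rw [Tset_top S hcover]
      intro τ
      have hres : res univ (extd (univ : Finset V) τ d) = τ := res_extd _ τ d
      have : marg p (univ : Finset V) τ = p (extd (univ : Finset V) τ d) := by
        conv_lhs => rw [← hres]
        exact marg_univ p _
      rw [this, hf (extd (univ : Finset V) τ d), ← Gfun_top p S P]
    | succ dd IH =>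
      intro k hkd τ
      have hk : k < Γ := by omega
      have key := marg_glue (Tset S k) (S ⟨k, hk⟩) (disjoint_Tset_S S hdisj k hk) p τ
      rw [← key]
      have IH' := IH (k + 1) (by omega)
      rw [Tset_succ S k hk] at IH'
      calc ∑ s : S ⟨k, hk⟩ → Fin q,
            marg p (Tset S k ∪ S ⟨k, hk⟩) (glue (Tset S k) (S ⟨k, hk⟩) τ s)
          ≤ ∑ s : S ⟨k, hk⟩ → Fin q,
            Gfun p S P (k + 1) (extd (Tset S k ∪ S ⟨k, hk⟩) (glue (Tset S k) (S ⟨k, hk⟩) τ s) d) :=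
            Finset.sum_le_sum fun s _ => IH' _
        _ = ∑ s : S ⟨k, hk⟩ → Fin q,
            Gfun p S P k (extd (Tset S k) τ d) *
              condFactor p (S ⟨k, hk⟩) (P ⟨k, hk⟩) (ovr (S ⟨k, hk⟩) (extd (Tset S k) τ d) s) := by
            refine Finset.sum_congr rfl fun s _ => ?_
            rw [Gfun_succ p S P k hk, extd_glue _ _ (disjoint_Tset_S S hdisj k hk)]
            congr 1
            refine Gfun_congr p S P hP k fun v hv => ?_
            have hvs : v ∉ S ⟨k, hk⟩ :=
              fun h => Finset.disjoint_left.1 (disjoint_Tset_S S hdisj k hk) hv h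
            simp [ovr, hvs]
        _ = Gfun p S P k (extd (Tset S k) τ d) *
            ∑ s : S ⟨k, hk⟩ → Fin q,
              condFactor p (S ⟨k, hk⟩) (P ⟨k, hk⟩) (ovr (S ⟨k, hk⟩) (extd (Tset S k) τ d) s) := by
            rw [Finset.mul_sum]
        _ ≤ Gfun p S P k (extd (Tset S k) τ d) * 1 := by
            refine mul_le_mul_of_nonneg_left ?_ (Gfun_nonneg h0 S P k _)
            rw [sum_condFactor (S ⟨k, hk⟩) (P ⟨k, hk⟩)
              (disjoint_P_S S P hdisj hP ⟨k, hk⟩) p (extd (Tset S k) τ d)]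
            split <;> norm_num
        _ = Gfun p S P k (extd (Tset S k) τ d) := mul_one _
  -- Part U : sum of G is at most one, upward induction
  have partU : ∀ k, k ≤ Γ →
      (∑ τ : Tset S k → Fin q, Gfun p S P k (extd (Tset S k) τ d)) ≤ 1 := by
    intro k
    induction k with
    | zero =>
      intro _
      rw [Tset_zero S]
      calc ∑ τ : ((∅ : Finset V) : Finset V) → Fin q, Gfun p S P 0 (extd ∅ τ d)
          = ∑ _τ : ((∅ : Finset V) : Finset V) → Fin q, (1 : ℝ) :=
            Finset.sum_congr rfl fun τ _ => Gfun_zero p S P _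
        _ = 1 := sum_empty_config 1
        _ ≤ 1 := le_rfl
    | succ n IH =>
      intro hk
      have hkn : n < Γ := by omega
      rw [Tset_succ S n hkn,
        sum_glue_split (Tset S n) (S ⟨n, hkn⟩) (disjoint_Tset_S S hdisj n hkn)]
      calc ∑ ρ : Tset S n → Fin q, ∑ s : S ⟨n, hkn⟩ → Fin q,
            Gfun p S P (n + 1) (extd (Tset S n ∪ S ⟨n, hkn⟩) (glue (Tset S n) (S ⟨n, hkn⟩) ρ s) d)
          = ∑ ρ : Tset S n → Fin q, Gfun p S P n (extd (Tset S n) ρ d) *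
              ∑ s : S ⟨n, hkn⟩ → Fin q,
                condFactor p (S ⟨n, hkn⟩) (P ⟨n, hkn⟩) (ovr (S ⟨n, hkn⟩) (extd (Tset S n) ρ d) s) := by
            refine Finset.sum_congr rfl fun ρ _ => ?_
            rw [Finset.mul_sum]
            refine Finset.sum_congr rfl fun s _ => ?_
            rw [Gfun_succ p S P n hkn, extd_glue _ _ (disjoint_Tset_S S hdisj n hkn)]
            congr 1
            refine Gfun_congr p S P hP n fun v hv => ?_
            have hvs : v ∉ S ⟨n, hkn⟩ :=
              fun h => Finset.disjoint_left.1 (disjoint_Tset_S S hdisj n hkn) hv h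
            simp [ovr, hvs]
        _ ≤ ∑ ρ : Tset S n → Fin q, Gfun p S P n (extd (Tset S n) ρ d) * 1 := by
            refine Finset.sum_le_sum fun ρ _ => ?_
            refine mul_le_mul_of_nonneg_left ?_ (Gfun_nonneg h0 S P n _)
            rw [sum_condFactor (S ⟨n, hkn⟩) (P ⟨n, hkn⟩)
              (disjoint_P_S S P hdisj hP ⟨n, hkn⟩) p (extd (Tset S n) ρ d)]
            split <;> norm_num
        _ ≤ 1 := by
            simp only [mul_one]
            exact IH (by omega)
  -- combine
  intro k hk τ
  have hle : ∀ τ : Tset S k → Fin q,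
      marg p (Tset S k) τ ≤ Gfun p S P k (extd (Tset S k) τ d) :=
    partD (Γ - k) k (by omega)
  have hsum1 : ∑ τ : Tset S k → Fin q, marg p (Tset S k) τ = 1 := by
    rw [marg_sum]; exact h1
  have heq : (∑ τ : Tset S k → Fin q, marg p (Tset S k) τ) =
      ∑ τ : Tset S k → Fin q, Gfun p S P k (extd (Tset S k) τ d) :=
    le_antisymm (Finset.sum_le_sum fun τ _ => hle τ) (by rw [hsum1]; exact partU k hk)
  exact (Finset.sum_eq_sum_iff_of_le fun τ _ => hle τ).1 heq τ (Finset.mem_univ τ)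


set_option maxHeartbeats 2000000 in
lemma claimB (S P : Fin Γ → Finset V)
    (hdisj : ∀ i j, i ≠ j → Disjoint (S i) (S j))
    (hcover : Finset.univ.biUnion S = (Finset.univ : Finset V))
    (hP : ∀ j, P j ⊆ (Finset.univ.filter (fun i => i < j)).biUnion S)
    (p : (V → Fin q) → ℝ) (h0 : ∀ σ, 0 ≤ p σ) (h1 : ∑ σ, p σ = 1)
    (hf : HasFactorization p S P) (d : Fin q) (k : ℕ) (hk : k < Γ)
    (τ : (Tset S k ∪ S ⟨k, hk⟩ : Finset V) → Fin q) :
    marg p (Tset S k ∪ S ⟨k, hk⟩) τ =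
      marg p (Tset S k) (fun a => τ ⟨a.1, Finset.mem_union_left _ a.2⟩) *
        condFactor p (S ⟨k, hk⟩) (P ⟨k, hk⟩) (extd (Tset S k ∪ S ⟨k, hk⟩) τ d) := by
  have hA := claimA S P hdisj hcover hP p h0 h1 hf d (k + 1) (by omega)
  rw [Tset_succ S k hk] at hA
  rw [hA τ, Gfun_succ p S P k hk]
  congr 1
  rw [claimA S P hdisj hcover hP p h0 h1 hf d k (by omega)
    (fun a => τ ⟨a.1, Finset.mem_union_left _ a.2⟩)]
  refine Gfun_congr p S P hP k fun v hv => ?_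
  have hm : v ∈ Tset S k ∪ S ⟨k, hk⟩ := Finset.mem_union_left _ hv
  simp [extd, hm, hv]

lemma marg_glue_eq_mul (Sk Pk : Finset V) (hd : Disjoint Pk Sk)
    (p : (V → Fin q) → ℝ) (h0 : ∀ σ, 0 ≤ p σ) (d : Fin q)
    (η : Pk → Fin q) (s : Sk → Fin q) :
    marg p (Pk ∪ Sk) (glue Pk Sk η s) =
      marg p Pk η * condFactor p Sk Pk (ovr Sk (extd Pk η d) s) := by
  have hden : (fun a : Pk => ovr Sk (extd Pk η d) s a) = η := by
    funext a
    have hns : (a : V) ∉ Sk := fun h => Finset.disjoint_left.1 hd a.2 h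
    simp [ovr, extd, hns, a.2]
  have hnum : (fun a : (Pk ∪ Sk : Finset V) => ovr Sk (extd Pk η d) s a) =
      glue Pk Sk η s := by
    funext x
    by_cases h : (x : V) ∈ Pk
    · have hns : (x : V) ∉ Sk := fun h' => Finset.disjoint_left.1 hd h h'
      rw [glue_left Pk Sk _ _ _ h]
      simp [ovr, extd, hns, h]
    · have hC : (x : V) ∈ Sk := (Finset.mem_union.1 x.2).resolve_left h
      rw [glue_right Pk Sk hd _ _ _ hC]
      simp [ovr, hC]
  unfold condFactor
  rw [union_comm Sk Pk, hnum, hden]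
  by_cases h : marg p Pk η = 0
  · rw [h, marg_glue_eq_zero hd h0 h s, zero_mul]
  · rw [mul_comm (marg p Pk η), div_mul_cancel₀ _ h]

lemma sum_sqrt_mul_le_one {α : Type*} [Fintype α] (p1 p2 : α → ℝ)
    (h10 : ∀ x, 0 ≤ p1 x) (h20 : ∀ x, 0 ≤ p2 x)
    (h11 : ∑ x, p1 x = 1) (h21 : ∑ x, p2 x = 1) :
    ∑ x, Real.sqrt (p1 x * p2 x) ≤ 1 := by
  calc ∑ x, Real.sqrt (p1 x * p2 x) = ∑ x, Real.sqrt (p1 x) * Real.sqrt (p2 x) :=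
        Finset.sum_congr rfl fun x _ => Real.sqrt_mul (h10 x) _
    _ ≤ Real.sqrt (∑ x, p1 x) * Real.sqrt (∑ x, p2 x) :=
        Real.sum_sqrt_mul_sqrt_le _ h10 h20
    _ = 1 := by rw [h11, h21, Real.sqrt_one, mul_one]

lemma fiber_cs {ι κ : Type*} [Fintype ι] [Fintype κ] [DecidableEq κ]
    (w1 w2 : ι → ℝ) (W1 W2 : κ → ℝ) (π : ι → κ)
    (h1 : ∀ i, 0 ≤ w1 i) (h2 : ∀ i, 0 ≤ w2 i)
    (hW1 : ∀ η, ∑ i, (if π i = η then w1 i else 0) = W1 η)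
    (hW2 : ∀ η, ∑ i, (if π i = η then w2 i else 0) = W2 η)
    (g : κ → ℝ) (hg0 : ∀ η, 0 ≤ g η) :
    ∑ i, Real.sqrt (w1 i * w2 i) * g (π i) ≤ ∑ η, Real.sqrt (W1 η * W2 η) * g η := by
  classical
  have hsplit : ∑ i, Real.sqrt (w1 i * w2 i) * g (π i) =
      ∑ η, ∑ i ∈ Finset.univ.filter (fun i => π i = η), Real.sqrt (w1 i * w2 i) * g (π i) :=
    (Finset.sum_fiberwise_of_maps_to (fun i _ => Finset.mem_univ (π i)) _).symm
  rw [hsplit]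
  refine Finset.sum_le_sum fun η _ => ?_
  have hfib : ∀ i ∈ Finset.univ.filter (fun i => π i = η), g (π i) = g η := by
    intro i hi
    simp only [Finset.mem_filter] at hi
    rw [hi.2]
  calc ∑ i ∈ Finset.univ.filter (fun i => π i = η), Real.sqrt (w1 i * w2 i) * g (π i)
      = (∑ i ∈ Finset.univ.filter (fun i => π i = η), Real.sqrt (w1 i * w2 i)) * g η := by
        rw [Finset.sum_mul]
        exact Finset.sum_congr rfl fun i hi => by rw [hfib i hi]
    _ ≤ Real.sqrt (W1 η * W2 η) * g η := by
        refine mul_le_mul_of_nonneg_right ?_ (hg0 η)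
        calc ∑ i ∈ Finset.univ.filter (fun i => π i = η), Real.sqrt (w1 i * w2 i)
            = ∑ i ∈ Finset.univ.filter (fun i => π i = η),
                Real.sqrt (w1 i) * Real.sqrt (w2 i) :=
              Finset.sum_congr rfl fun i _ => Real.sqrt_mul (h1 i) _
          _ ≤ Real.sqrt (∑ i ∈ Finset.univ.filter (fun i => π i = η), w1 i) *
              Real.sqrt (∑ i ∈ Finset.univ.filter (fun i => π i = η), w2 i) :=
              Real.sum_sqrt_mul_sqrt_le _ h1 h2
          _ = Real.sqrt (W1 η * W2 η) := by
              rw [← hW1 η, ← hW2 η, ← Real.sqrt_mul (Finset.sum_nonneg fun i _ => h1 i)]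
              congr 2 <;>
                · rw [Finset.sum_filter]
    _ = Real.sqrt (W1 η * W2 η) * g η := rfl

lemma marg_fiber_sum (A Pk : Finset V) (hsub : Pk ⊆ A) (p : (V → Fin q) → ℝ)
    (η : Pk → Fin q) :
    ∑ ρ : A → Fin q,
      (if (fun b : Pk => ρ ⟨b.1, hsub b.2⟩) = η then marg p A ρ else 0) = marg p Pk η := by
  classical
  unfold marg
  have hstep : ∀ ρ : A → Fin q,
      (if (fun b : Pk => ρ ⟨b.1, hsub b.2⟩) = η
        then (∑ σ : V → Fin q, if (∀ a : A, σ a = ρ a) then p σ else 0) else 0) =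
      ∑ σ : V → Fin q,
        (if ((fun b : Pk => ρ ⟨b.1, hsub b.2⟩) = η ∧ ∀ a : A, σ a = ρ a)
          then p σ else 0) := by
    intro ρ
    by_cases h : (fun b : Pk => ρ ⟨b.1, hsub b.2⟩) = η
    · simp [h]
    · simp [h]
  rw [Finset.sum_congr rfl fun ρ _ => hstep ρ, Finset.sum_comm]
  refine Finset.sum_congr rfl fun σ _ => ?_
  have hcond : ∀ ρ : A → Fin q,
      ((fun b : Pk => ρ ⟨b.1, hsub b.2⟩) = η ∧ ∀ a : A, σ a = ρ a) ↔
        (ρ = res A σ ∧ ∀ a : Pk, σ a = η a) := by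
    intro ρ
    constructor
    · rintro ⟨h1, h2⟩
      have hρ : ρ = res A σ := by funext a; exact (h2 a).symm
      refine ⟨hρ, fun b => ?_⟩
      rw [← h1]
      exact h2 ⟨b.1, hsub b.2⟩
    · rintro ⟨hρ, h2⟩
      subst hρ
      refine ⟨?_, fun a => rfl⟩
      funext b
      exact h2 b
  calc ∑ ρ : A → Fin q,
        (if ((fun b : Pk => ρ ⟨b.1, hsub b.2⟩) = η ∧ ∀ a : A, σ a = ρ a) then p σ else 0)
      = ∑ ρ : A → Fin q,
        (if ρ = res A σ then (if (∀ a : Pk, σ a = η a) then p σ else 0) else 0) := by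
        refine Finset.sum_congr rfl fun ρ _ => ?_
        rw [if_congr (hcond ρ) rfl rfl]
        by_cases h1 : ρ = res A σ <;> by_cases h2 : ∀ a : Pk, σ a = η a <;> simp [h1, h2]
    _ = _ := by rw [Finset.sum_ite_eq' Finset.univ (res A σ)]; simp

lemma dH_sq {α : Type*} [Fintype α] (p r : α → ℝ)
    (hp0 : ∀ x, 0 ≤ p x) (hr0 : ∀ x, 0 ≤ r x)
    (hp1 : ∑ x, p x = 1) (hr1 : ∑ x, r x = 1) :
    dH p r ^ 2 = 2 - 2 * ∑ x, Real.sqrt (p x * r x) := by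
  rw [dH, Real.sq_sqrt (Finset.sum_nonneg fun x _ => sq_nonneg _)]
  have hpt : ∀ x, (Real.sqrt (p x) - Real.sqrt (r x)) ^ 2 =
      p x + r x - 2 * Real.sqrt (p x * r x) := by
    intro x
    rw [sub_sq, Real.sq_sqrt (hp0 x), Real.sq_sqrt (hr0 x), Real.sqrt_mul (hp0 x)]
    ring
  rw [Finset.sum_congr rfl fun x _ => hpt x]
  rw [Finset.sum_sub_distrib, Finset.sum_add_distrib, ← Finset.mul_sum, hp1, hr1]
  ring

end aux

set_option maxHeartbeats 4000000 in
/-- subadditivity of squared Hellinger distance for Markov random fields,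
Daskalakis–Pan.  Let `μ, ν` be probability measures on `[q]^V` with common factorization
structure with respect to a partition `V = S₁ ∪ ⋯ ∪ S_Γ` (pairwise disjoint, covering `V`)
and conditioning sets `Π_j ⊆ S₁ ∪ ⋯ ∪ S_{j−1}` (so `Π₁ = ∅`).  Then
`d_H²(μ,ν) ≤ ∑_j d_H²(μ|_{S_j∪Π_j}, ν|_{S_j∪Π_j})`. -/
theorem stmt1 {V : Type*} [Fintype V] [DecidableEq V] (q : ℕ) (hq : 1 ≤ q)
    (Γ : ℕ) (S P : Fin Γ → Finset V)
    (hdisj : ∀ i j, i ≠ j → Disjoint (S i) (S j))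
    (hcover : Finset.univ.biUnion S = (Finset.univ : Finset V))
    (hP : ∀ j, P j ⊆ (Finset.univ.filter (fun i => i < j)).biUnion S)
    (μ ν : (V → Fin q) → ℝ)
    (hμ0 : ∀ σ, 0 ≤ μ σ) (hμ1 : ∑ σ, μ σ = 1)
    (hν0 : ∀ σ, 0 ≤ ν σ) (hν1 : ∑ σ, ν σ = 1)
    (hμf : HasFactorization μ S P) (hνf : HasFactorization ν S P) :
    dH μ ν ^ 2 ≤ ∑ j, dH (marg μ (S j ∪ P j)) (marg ν (S j ∪ P j)) ^ 2 := by
  classical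
  have hq0 : 0 < q := hq
  set d : Fin q := ⟨0, hq0⟩ with hd
  set a : ℕ → ℝ := fun k =>
    ∑ τ : Tset S k → Fin q, Real.sqrt (marg μ (Tset S k) τ * marg ν (Tset S k) τ) with ha
  set B : Fin Γ → ℝ := fun j =>
    ∑ w : (S j ∪ P j : Finset V) → Fin q,
      Real.sqrt (marg μ (S j ∪ P j) w * marg ν (S j ∪ P j) w) with hB
  -- endpoints
  have ha0 : a 0 = 1 := by
    simp only [ha]
    rw [Tset_zero S]
    calc ∑ τ : ((∅ : Finset V) : Finset V) → Fin q,
          Real.sqrt (marg μ ∅ τ * marg ν ∅ τ)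
        = ∑ _τ : ((∅ : Finset V) : Finset V) → Fin q, (1 : ℝ) := by
          refine Finset.sum_congr rfl fun τ _ => ?_
          rw [marg_empty μ τ, marg_empty ν τ, hμ1, hν1]
          norm_num
      _ = 1 := sum_empty_config 1
  have haG : a Γ = ∑ σ, Real.sqrt (μ σ * ν σ) := by
    simp only [ha]
    rw [Tset_top S hcover,
      sum_univ_config (fun τ => Real.sqrt (marg μ univ τ * marg ν univ τ))]
    exact Finset.sum_congr rfl fun σ _ => by rw [marg_univ μ σ, marg_univ ν σ]
  -- the key per-block estimate
  have hstep : ∀ (k : ℕ) (hk : k < Γ), a k - a (k + 1) ≤ 1 - B ⟨k, hk⟩ := by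
    intro k hk
    have hd1 : Disjoint (Tset S k) (S ⟨k, hk⟩) := disjoint_Tset_S S hdisj k hk
    have hd2 : Disjoint (P ⟨k, hk⟩) (S ⟨k, hk⟩) := (disjoint_P_S S P hdisj hP ⟨k, hk⟩)
    have hd2' : Disjoint (P ⟨k, hk⟩) (S ⟨k, hk⟩) := hd2
    have hsub : P ⟨k, hk⟩ ⊆ Tset S k := P_subset_Tset S P hP ⟨k, hk⟩
    set cc : ((P ⟨k, hk⟩ : Finset V) → Fin q) → ℝ := fun η =>
      ∑ s : S ⟨k, hk⟩ → Fin q,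
        Real.sqrt (condFactor μ (S ⟨k, hk⟩) (P ⟨k, hk⟩) (ovr (S ⟨k, hk⟩) (extd (P ⟨k, hk⟩) η d) s) *
          condFactor ν (S ⟨k, hk⟩) (P ⟨k, hk⟩) (ovr (S ⟨k, hk⟩) (extd (P ⟨k, hk⟩) η d) s)) with hccdef
    have hcc0 : ∀ η, 0 ≤ cc η := fun η =>
      Finset.sum_nonneg fun s _ => Real.sqrt_nonneg _
    have hcc1 : ∀ η, cc η ≤ 1 := by
      intro η
      have hμs := sum_condFactor (S ⟨k, hk⟩) (P ⟨k, hk⟩) hd2 μ (extd (P ⟨k, hk⟩) η d)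
      have hνs := sum_condFactor (S ⟨k, hk⟩) (P ⟨k, hk⟩) hd2 ν (extd (P ⟨k, hk⟩) η d)
      calc cc η
          ≤ Real.sqrt (∑ s : S ⟨k, hk⟩ → Fin q,
                condFactor μ (S ⟨k, hk⟩) (P ⟨k, hk⟩) (ovr (S ⟨k, hk⟩) (extd (P ⟨k, hk⟩) η d) s)) *
              Real.sqrt (∑ s : S ⟨k, hk⟩ → Fin q,
                condFactor ν (S ⟨k, hk⟩) (P ⟨k, hk⟩) (ovr (S ⟨k, hk⟩) (extd (P ⟨k, hk⟩) η d) s)) := by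
            rw [hccdef]
            have := Real.sum_sqrt_mul_sqrt_le (Finset.univ : Finset (S ⟨k, hk⟩ → Fin q))
              (f := fun s => condFactor μ (S ⟨k, hk⟩) (P ⟨k, hk⟩) (ovr (S ⟨k, hk⟩) (extd (P ⟨k, hk⟩) η d) s))
              (g := fun s => condFactor ν (S ⟨k, hk⟩) (P ⟨k, hk⟩) (ovr (S ⟨k, hk⟩) (extd (P ⟨k, hk⟩) η d) s))
              (fun s => condFactor_nonneg hμ0 _ _ _) (fun s => condFactor_nonneg hν0 _ _ _)
            refine le_trans (le_of_eq ?_) this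
            exact Finset.sum_congr rfl fun s _ =>
              Real.sqrt_mul (condFactor_nonneg hμ0 _ _ _) _
        _ ≤ 1 := by
            rw [hμs, hνs]
            split <;> split <;> norm_num
    -- rewrite a (k+1)
    have hak1 : a (k + 1) = ∑ ρ : Tset S k → Fin q,
        Real.sqrt (marg μ (Tset S k) ρ * marg ν (Tset S k) ρ) *
          cc (fun b => ρ ⟨b.1, hsub b.2⟩) := by
      simp only [ha]
      rw [Tset_succ S k hk, sum_glue_split (Tset S k) (S ⟨k, hk⟩) hd1]
      refine Finset.sum_congr rfl fun ρ _ => ?_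
      rw [hccdef, Finset.mul_sum]
      refine Finset.sum_congr rfl fun s _ => ?_
      rw [claimB S P hdisj hcover hP μ hμ0 hμ1 hμf d k hk (glue (Tset S k) (S ⟨k, hk⟩) ρ s),
        claimB S P hdisj hcover hP ν hν0 hν1 hνf d k hk (glue (Tset S k) (S ⟨k, hk⟩) ρ s)]
      have hres : (fun aa : Tset S k =>
          glue (Tset S k) (S ⟨k, hk⟩) ρ s ⟨aa.1, Finset.mem_union_left _ aa.2⟩) = ρ := by
        funext aa; exact glue_left _ _ _ _ _ aa.2
      rw [hres, extd_glue _ _ hd1]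
      have hcf : ∀ (p : (V → Fin q) → ℝ),
          condFactor p (S ⟨k, hk⟩) (P ⟨k, hk⟩) (ovr (S ⟨k, hk⟩) (extd (Tset S k) ρ d) s) =
          condFactor p (S ⟨k, hk⟩) (P ⟨k, hk⟩)
            (ovr (S ⟨k, hk⟩) (extd (P ⟨k, hk⟩) (fun b => ρ ⟨b.1, hsub b.2⟩) d) s) := by
        intro p
        refine condFactor_congr p _ _ fun v hv => ?_
        rcases Finset.mem_union.1 hv with hvS | hvP
        · simp [ovr, hvS]
        · have hvnS : v ∉ S ⟨k, hk⟩ := fun h => Finset.disjoint_left.1 hd2 hvP h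
          have hvT : v ∈ Tset S k := hsub hvP
          simp [ovr, extd, hvnS, hvT, hvP]
      rw [hcf μ, hcf ν]
      have hring : (marg μ (Tset S k) ρ *
          condFactor μ (S ⟨k, hk⟩) (P ⟨k, hk⟩)
            (ovr (S ⟨k, hk⟩) (extd (P ⟨k, hk⟩) (fun b => ρ ⟨b.1, hsub b.2⟩) d) s)) *
          (marg ν (Tset S k) ρ *
          condFactor ν (S ⟨k, hk⟩) (P ⟨k, hk⟩)
            (ovr (S ⟨k, hk⟩) (extd (P ⟨k, hk⟩) (fun b => ρ ⟨b.1, hsub b.2⟩) d) s)) =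
          (marg μ (Tset S k) ρ * marg ν (Tset S k) ρ) *
          (condFactor μ (S ⟨k, hk⟩) (P ⟨k, hk⟩)
            (ovr (S ⟨k, hk⟩) (extd (P ⟨k, hk⟩) (fun b => ρ ⟨b.1, hsub b.2⟩) d) s) *
           condFactor ν (S ⟨k, hk⟩) (P ⟨k, hk⟩)
            (ovr (S ⟨k, hk⟩) (extd (P ⟨k, hk⟩) (fun b => ρ ⟨b.1, hsub b.2⟩) d) s)) := by
        ring
      rw [hring, Real.sqrt_mul (mul_nonneg (marg_nonneg hμ0 _ _) (marg_nonneg hν0 _ _))]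
    -- difference as a single sum
    have hdiff : a k - a (k + 1) = ∑ ρ : Tset S k → Fin q,
        Real.sqrt (marg μ (Tset S k) ρ * marg ν (Tset S k) ρ) *
          (1 - cc (fun b => ρ ⟨b.1, hsub b.2⟩)) := by
      rw [hak1]
      simp only [ha]
      rw [← Finset.sum_sub_distrib]
      exact Finset.sum_congr rfl fun ρ _ => by ring
    rw [hdiff]
    -- group over P-configurations via Cauchy–Schwarz
    have hgroup := fiber_cs (marg μ (Tset S k)) (marg ν (Tset S k))
      (marg μ (P ⟨k, hk⟩)) (marg ν (P ⟨k, hk⟩))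
      (fun ρ : Tset S k → Fin q => fun b : (P ⟨k, hk⟩ : Finset V) => ρ ⟨b.1, hsub b.2⟩)
      (fun ρ => marg_nonneg hμ0 _ _) (fun ρ => marg_nonneg hν0 _ _)
      (fun η => marg_fiber_sum (Tset S k) (P ⟨k, hk⟩) hsub μ η)
      (fun η => marg_fiber_sum (Tset S k) (P ⟨k, hk⟩) hsub ν η)
      (fun η => 1 - cc η) (fun η => by simpa using sub_nonneg.2 (hcc1 η))
    refine le_trans hgroup ?_
    -- identify B
    have hBid : B ⟨k, hk⟩ = ∑ η : (P ⟨k, hk⟩ : Finset V) → Fin q,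
        Real.sqrt (marg μ (P ⟨k, hk⟩) η * marg ν (P ⟨k, hk⟩) η) * cc η := by
      simp only [hB]
      rw [union_comm (S ⟨k, hk⟩) (P ⟨k, hk⟩), sum_glue_split (P ⟨k, hk⟩) (S ⟨k, hk⟩) hd2]
      refine Finset.sum_congr rfl fun η _ => ?_
      rw [hccdef, Finset.mul_sum]
      refine Finset.sum_congr rfl fun s _ => ?_
      rw [marg_glue_eq_mul (S ⟨k, hk⟩) (P ⟨k, hk⟩) hd2 μ hμ0 d η s,
        marg_glue_eq_mul (S ⟨k, hk⟩) (P ⟨k, hk⟩) hd2 ν hν0 d η s]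
      have hring : (marg μ (P ⟨k, hk⟩) η *
          condFactor μ (S ⟨k, hk⟩) (P ⟨k, hk⟩) (ovr (S ⟨k, hk⟩) (extd (P ⟨k, hk⟩) η d) s)) *
          (marg ν (P ⟨k, hk⟩) η *
          condFactor ν (S ⟨k, hk⟩) (P ⟨k, hk⟩) (ovr (S ⟨k, hk⟩) (extd (P ⟨k, hk⟩) η d) s)) =
          (marg μ (P ⟨k, hk⟩) η * marg ν (P ⟨k, hk⟩) η) *
          (condFactor μ (S ⟨k, hk⟩) (P ⟨k, hk⟩) (ovr (S ⟨k, hk⟩) (extd (P ⟨k, hk⟩) η d) s) *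
           condFactor ν (S ⟨k, hk⟩) (P ⟨k, hk⟩) (ovr (S ⟨k, hk⟩) (extd (P ⟨k, hk⟩) η d) s)) := by
        ring
      rw [hring, Real.sqrt_mul (mul_nonneg (marg_nonneg hμ0 _ _) (marg_nonneg hν0 _ _))]
    have hone : ∑ η : (P ⟨k, hk⟩ : Finset V) → Fin q,
        Real.sqrt (marg μ (P ⟨k, hk⟩) η * marg ν (P ⟨k, hk⟩) η) ≤ 1 :=
      sum_sqrt_mul_le_one _ _ (fun η => marg_nonneg hμ0 _ _) (fun η => marg_nonneg hν0 _ _)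
        (by rw [marg_sum]; exact hμ1) (by rw [marg_sum]; exact hν1)
    calc ∑ η : (P ⟨k, hk⟩ : Finset V) → Fin q,
          Real.sqrt (marg μ (P ⟨k, hk⟩) η * marg ν (P ⟨k, hk⟩) η) * (1 - cc η)
        = (∑ η : (P ⟨k, hk⟩ : Finset V) → Fin q,
            Real.sqrt (marg μ (P ⟨k, hk⟩) η * marg ν (P ⟨k, hk⟩) η)) -
          ∑ η : (P ⟨k, hk⟩ : Finset V) → Fin q,
            Real.sqrt (marg μ (P ⟨k, hk⟩) η * marg ν (P ⟨k, hk⟩) η) * cc η := by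
          rw [← Finset.sum_sub_distrib]
          exact Finset.sum_congr rfl fun η _ => by ring
      _ ≤ 1 - B ⟨k, hk⟩ := by
          rw [hBid]
          linarith
  -- telescoping and conclusion
  have htel : 1 - a Γ ≤ ∑ j : Fin Γ, (1 - B j) := by
    have h1 : 1 - a Γ = ∑ kk ∈ Finset.range Γ, (a kk - a (kk + 1)) := by
      rw [Finset.sum_range_sub' a Γ, ha0]
    have h2 : ∑ kk ∈ Finset.range Γ, (a kk - a (kk + 1)) =
        ∑ j : Fin Γ, (a j.1 - a (j.1 + 1)) :=
      (Fin.sum_univ_eq_sum_range (fun kk => a kk - a (kk + 1)) Γ).symm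
    rw [h1, h2]
    refine Finset.sum_le_sum fun j _ => ?_
    simpa using hstep j.1 j.2
  have hdHlhs : dH μ ν ^ 2 = 2 - 2 * a Γ := by
    rw [dH_sq μ ν hμ0 hν0 hμ1 hν1, haG]
  have hdHrhs : ∀ j : Fin Γ,
      dH (marg μ (S j ∪ P j)) (marg ν (S j ∪ P j)) ^ 2 = 2 - 2 * B j := by
    intro j
    rw [dH_sq (marg μ (S j ∪ P j)) (marg ν (S j ∪ P j))
      (fun w => marg_nonneg hμ0 _ _) (fun w => marg_nonneg hν0 _ _)
      (by rw [marg_sum]; exact hμ1) (by rw [marg_sum]; exact hν1)]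
  calc dH μ ν ^ 2 = 2 - 2 * a Γ := hdHlhs
    _ ≤ ∑ j : Fin Γ, (2 - 2 * B j) := by
        have hcard : ∑ j : Fin Γ, (2 - 2 * B j) = 2 * (Γ : ℝ) - 2 * ∑ j, B j := by
          rw [Finset.sum_sub_distrib, ← Finset.mul_sum]
          simp [Finset.card_univ, mul_comm]
        have hsum1 : ∑ j : Fin Γ, ((1 : ℝ) - B j) = (Γ : ℝ) - ∑ j, B j := by
          rw [Finset.sum_sub_distrib]
          simp [Finset.card_univ]
        rw [hcard]
        have := htel
        rw [hsum1] at this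
        linarith
    _ = ∑ j, dH (marg μ (S j ∪ P j)) (marg ν (S j ∪ P j)) ^ 2 :=
        Finset.sum_congr rfl fun j _ => (hdHrhs j).symm
end

section
/- Consider the tree-based Ising posterior μ(·|Z) on Ω = {±1}^V for the depth-n binary tree, with inverse temperature β > 0, noise parameter δ ∈ (0,1/2), and observation data Z. Fix a path γ₁, γ₂, …, γ_k in the tree. Let σ^{(+)} (respectively σ^{(−)}) be distributed as μ(·|Z) conditioned additionally on σ(γ₁) = +1 (respectively σ(γ₁) = −1). Then for every 1 ≤ j ≤ k, d_TV( law of (σ^{(+)}(γ_j), …, σ^{(+)}(γ_k)), law of (σ^{(−)}(γ_j), …, σ^{(−)}(γ_k)) ) ≤ (1 − ε_β)^{j−1}, where ε_β = e^{−6β}. -/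
open Finset

/-- Vertices of the complete binary tree of depth `n`: a vertex is a pair `(i,j)` where
`i ≤ n` is the depth and `j < 2^i` indexes the vertices at depth `i`. -/
abbrev Vtx (n : ℕ) := (i : Fin (n + 1)) × Fin (2 ^ (i : ℕ))

/-- The root `x₀₀` of the tree. -/
def root (n : ℕ) : Vtx n := ⟨0, ⟨0, by positivity⟩⟩

/-- A vertex is the root iff its depth is `0`. -/
def isRoot {n : ℕ} (v : Vtx n) : Prop := (v.1 : ℕ) = 0

instance {n : ℕ} (v : Vtx n) : Decidable (isRoot v) := by unfold isRoot; infer_instance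

/-- The parent of a vertex (the root is assigned itself). -/
def par {n : ℕ} (v : Vtx n) : Vtx n :=
  if h : (v.1 : ℕ) = 0 then v
  else
    ⟨⟨(v.1 : ℕ) - 1, by have := v.1.isLt; omega⟩,
     ⟨(v.2 : ℕ) / 2, by
        have hj := v.2.isLt
        have h2 : ((v.1 : ℕ) - 1) + 1 = (v.1 : ℕ) := by omega
        have hlt : (v.2 : ℕ) < 2 * 2 ^ ((v.1 : ℕ) - 1) := by
          have he : 2 * 2 ^ ((v.1 : ℕ) - 1) = 2 ^ (v.1 : ℕ) := by
            rw [← pow_succ', h2]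
          rw [he]; exact hj
        exact Nat.div_lt_of_lt_mul hlt⟩⟩

/-- Adjacency in the tree: `v` and `w` are joined by an edge iff one is the parent of
the other. -/
def Adj {n : ℕ} (v w : Vtx n) : Prop :=
  (¬ isRoot v ∧ par v = w) ∨ (¬ isRoot w ∧ par w = v)

/-- The spin `±1` attached to a Boolean value (`true ↦ +1`, `false ↦ −1`). -/
def spin (b : Bool) : ℝ := if b then 1 else -1

/-- `h_v(Z|s) = ∏_{j∈[n_v]} e^{ℓ(s,z_{vj})}`, the likelihood of the observations at
vertex `v` given spin `s`, where `ℓ(s,z) = log δ` if `s ≠ z` and `log(1−δ)` if `s = z`. -/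
noncomputable def hlik {n : ℕ} (δ : ℝ) (nobs : Vtx n → ℕ)
    (z : (v : Vtx n) → Fin (nobs v) → Bool) (v : Vtx n) (s : Bool) : ℝ :=
  ∏ j, if s = z v j then (1 - δ) else δ

/-- Unnormalized posterior weight of a configuration: Ising prior weight
`exp(β ∑_{(v,w)∈E} σ(v)σ(w))` (summing over edges as non-root vertices paired with their
parents) times the likelihood `∏_v h_v(Z|σ(v))`. -/
noncomputable def postW {n : ℕ} (β δ : ℝ) (nobs : Vtx n → ℕ)
    (z : (v : Vtx n) → Fin (nobs v) → Bool) (σ : Vtx n → Bool) : ℝ :=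
  Real.exp (β * ∑ v, if isRoot v then 0 else spin (σ v) * spin (σ (par v))) *
    ∏ v, hlik δ nobs z v (σ v)

/-- The tree-based Ising posterior `μ(σ|Z) ∝ f(σ) ∏_v h_v(Z|σ(v))` on `Ω = {±1}^V`. -/
noncomputable def post {n : ℕ} (β δ : ℝ) (nobs : Vtx n → ℕ)
    (z : (v : Vtx n) → Fin (nobs v) → Bool) (σ : Vtx n → Bool) : ℝ :=
  postW β δ nobs z σ / ∑ τ : Vtx n → Bool, postW β δ nobs z τ

/-- Total variation distance between probability mass functions on a finite type. -/
noncomputable def dTV {α : Type*} [Fintype α] (p q : α → ℝ) : ℝ :=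
  (∑ x, |p x - q x|) / 2


/-!
Cutting the tree at an edge `(c, par c)` leaves the edge factor `exp (β σ(c) σ(par c))` times a
weight that splits into a function of the spins below `c` and a function of the other spins.
Hence, along an injective path, the spins form a Markov chain under the posterior: given
`σ(γ_J)`, the spins further along the path are independent of `σ(γ₁)`. The chain has two states,
so each step multiplies the total variation distance between the two conditional laws by the
distance between the rows of the edge kernel `b ↦ e^{β a b} m(b) / Z_a`, which is at most
`1 - e^{-2β} ≤ 1 - e^{-6β}`; passing from one spin to the block of spins beyond it is a Markov
kernel and cannot increase the distance.
-/

section FactorsAcross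

variable {ι κ R : Type*} [CommSemiring R]

-- For positive `w` this says `w σ = f (σ on s) * g (σ off s)`.
open Classical in
def FactorsAcross (s : Set ι) (w : (ι → κ) → R) : Prop :=
  ∀ σ τ, w (s.piecewise τ σ) * w (s.piecewise σ τ) = w σ * w τ

variable {s : Set ι} {w w' : (ι → κ) → R}

theorem FactorsAcross.mul (h : FactorsAcross s w) (h' : FactorsAcross s w') :
    FactorsAcross s (fun σ => w σ * w' σ) := fun σ τ => by
  rw [mul_mul_mul_comm, h, h', mul_mul_mul_comm]

theorem FactorsAcross.compl (h : FactorsAcross s w) : FactorsAcross sᶜ w := fun σ τ => by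
  classical
  simp only [Set.piecewise_compl]
  rw [mul_comm, h]

theorem factorsAcross_comp_eval (s : Set ι) (f : κ → R) (i : ι) :
    FactorsAcross s (fun σ : ι → κ => f (σ i)) := fun σ τ => by
  classical
  by_cases hi : i ∈ s
  · simp only [Set.piecewise_eq_of_mem _ _ _ hi, mul_comm]
  · simp only [Set.piecewise_eq_of_notMem _ _ _ hi]

theorem factorsAcross_prod [Fintype ι] (s : Set ι) (f : ι → κ → R) :
    FactorsAcross s (fun σ : ι → κ => ∏ i, f i (σ i)) := fun σ τ => by
  simp only [← Finset.prod_mul_distrib]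
  exact Finset.prod_congr rfl fun i _ => factorsAcross_comp_eval s (f i) i σ τ

theorem FactorsAcross.ite_eval_eq [DecidableEq κ] {w₀ : (ι → κ) → R} (h₀ : FactorsAcross s w₀)
    {x y : ι} {ψ : κ → κ → R} (hw : ∀ σ, w σ = ψ (σ x) (σ y) * w₀ σ) (a : κ) :
    FactorsAcross s (fun σ => if σ x = a then w σ else 0) := by
  have hψ : (fun σ => if σ x = a then w σ else 0)
      = fun σ => (if σ x = a then 1 else 0) * ψ a (σ y) * w₀ σ := by
    funext σ
    split_ifs with h <;> simp [hw, h]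
  rw [hψ]
  exact ((factorsAcross_comp_eval s (fun b => if b = a then 1 else 0) x).mul
    (factorsAcross_comp_eval s (ψ a) y)).mul h₀

theorem FactorsAcross.sum_ite_and_mul_sum [Fintype ι] [DecidableEq ι] [Fintype κ]
    (h : FactorsAcross s w) (P Q : (ι → κ) → Prop) [DecidablePred P] [DecidablePred Q]
    (hP : DependsOn P sᶜ) (hQ : DependsOn Q s) :
    (∑ σ, if P σ ∧ Q σ then w σ else 0) * ∑ σ, w σ
      = (∑ σ, if P σ then w σ else 0) * ∑ σ, if Q σ then w σ else 0 := by
  classical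
  let swap : (ι → κ) × (ι → κ) → (ι → κ) × (ι → κ) :=
    fun p => (s.piecewise p.2 p.1, s.piecewise p.1 p.2)
  have hswap : Function.Involutive swap := fun p => by
    ext i <;> by_cases hi : i ∈ s <;> simp [swap, hi]
  simp only [Finset.sum_mul_sum, ← Finset.sum_product']
  refine Fintype.sum_equiv hswap.toPerm _ _ fun p => ?_
  obtain ⟨σ, τ⟩ := p
  have hPσ : P (s.piecewise τ σ) = P σ := hP fun i hi => Set.piecewise_eq_of_notMem _ _ _ hi
  have hQσ : Q (s.piecewise σ τ) = Q σ := hQ fun i hi => Set.piecewise_eq_of_mem _ _ _ hi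
  simp only [Function.Involutive.coe_toPerm, swap, ite_mul, mul_ite, zero_mul, mul_zero, hPσ,
    hQσ, ← h σ τ, ite_and]
  split_ifs <;> rfl

end FactorsAcross

section TotalVariation

variable {α : Type*} [Fintype α]

theorem dTV_nonneg (p q : α → ℝ) : 0 ≤ dTV p q :=
  div_nonneg (Finset.sum_nonneg fun _ _ => abs_nonneg _) zero_le_two

theorem dTV_le_one {p q : α → ℝ} (hp : ∀ x, 0 ≤ p x) (hq : ∀ x, 0 ≤ q x)
    (hp1 : ∑ x, p x = 1) (hq1 : ∑ x, q x = 1) : dTV p q ≤ 1 := by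
  have : ∑ x, |p x - q x| ≤ ∑ x, (p x + q x) :=
    Finset.sum_le_sum fun x _ => (abs_sub _ _).trans (by rw [abs_of_nonneg (hp x),
      abs_of_nonneg (hq x)])
  rw [Finset.sum_add_distrib, hp1, hq1] at this
  unfold dTV
  linarith

theorem dTV_eq_abs_sub_of_bool {p q : Bool → ℝ} (h : p true + p false = q true + q false) :
    dTV p q = |p true - q true| := by
  have : p false - q false = -(p true - q true) := by linarith
  rw [dTV, Fintype.sum_bool, this, abs_neg]
  ring

theorem dTV_sum_bool_mul {p q : Bool → ℝ} (h : p true + p false = q true + q false)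
    (K : Bool → α → ℝ) :
    dTV (fun t => ∑ b, p b * K b t) (fun t => ∑ b, q b * K b t)
      = dTV p q * dTV (K true) (K false) := by
  have hdiff : ∀ t, ∑ b, p b * K b t - ∑ b, q b * K b t
      = (p true - q true) * (K true t - K false t) := fun t => by
    simp only [Fintype.sum_bool]
    linear_combination (K false t) * h
  rw [dTV_eq_abs_sub_of_bool h, dTV, dTV]
  simp only [hdiff, abs_mul, ← Finset.mul_sum]
  ring

end TotalVariation

section CondLaw

variable {Ω α T : Type*} [Fintype Ω] [DecidableEq α] [DecidableEq T]

theorem sum_sum_ite_eq [Fintype α] (X : Ω → α) (f : Ω → ℝ) :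
    ∑ a, ∑ σ, (if X σ = a then f σ else 0) = ∑ σ, f σ := by
  rw [Finset.sum_comm]
  simp

noncomputable def condLaw (w : Ω → ℝ) (E : Ω → Prop) [DecidablePred E] (Y : Ω → T) (t : T) :
    ℝ :=
  (∑ σ, if E σ ∧ Y σ = t then w σ else 0) / ∑ σ, if E σ then w σ else 0

variable {w : Ω → ℝ} {E : Ω → Prop} [DecidablePred E]

theorem sum_ite_pos (hw : ∀ σ, 0 < w σ) {σ₀ : Ω} (h : E σ₀) :
    0 < ∑ σ, if E σ then w σ else 0 :=
  Finset.sum_pos' (fun σ _ => by split_ifs <;> simp [(hw σ).le])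
    ⟨σ₀, Finset.mem_univ _, by simp [h, hw σ₀]⟩

theorem condLaw_div_const {c : ℝ} (hc : c ≠ 0) (Y : Ω → T) :
    condLaw (fun σ => w σ / c) E Y = condLaw w E Y := by
  have hsum : ∀ (P : Ω → Prop) [DecidablePred P],
      (∑ σ, if P σ then w σ / c else 0) = (∑ σ, if P σ then w σ else 0) / c := fun P _ => by
    rw [Finset.sum_div]
    exact Finset.sum_congr rfl fun σ _ => by split_ifs <;> simp
  funext t
  rw [condLaw, condLaw, hsum, hsum, div_div_div_cancel_right₀ hc]

theorem condLaw_nonneg (hw : ∀ σ, 0 ≤ w σ) (Y : Ω → T) (t : T) : 0 ≤ condLaw w E Y t := by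
  unfold condLaw
  refine div_nonneg ?_ ?_ <;> exact Finset.sum_nonneg fun σ _ => by split_ifs <;> simp [hw]

theorem sum_sum_ite_and_eq [Fintype T] (E : Ω → Prop) [DecidablePred E] (Y : Ω → T)
    (f : Ω → ℝ) : ∑ t, ∑ σ, (if E σ ∧ Y σ = t then f σ else 0) = ∑ σ, if E σ then f σ else 0 := by
  rw [← sum_sum_ite_eq Y]
  refine Finset.sum_congr rfl fun t _ => Finset.sum_congr rfl fun σ _ => ?_
  simp only [ite_and]
  split_ifs <;> rfl

theorem sum_condLaw [Fintype T] (hE : (∑ σ, if E σ then w σ else 0) ≠ 0) (Y : Ω → T) :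
    ∑ t, condLaw w E Y t = 1 := by
  unfold condLaw
  rw [← Finset.sum_div, div_eq_one_iff_eq hE, sum_sum_ite_and_eq]

theorem dTV_condLaw_le_one [Fintype T] (hw : ∀ σ, 0 ≤ w σ) {E' : Ω → Prop} [DecidablePred E']
    (hE : (∑ σ, if E σ then w σ else 0) ≠ 0) (hE' : (∑ σ, if E' σ then w σ else 0) ≠ 0)
    (Y : Ω → T) : dTV (condLaw w E Y) (condLaw w E' Y) ≤ 1 :=
  dTV_le_one (condLaw_nonneg hw Y) (condLaw_nonneg hw Y) (sum_condLaw hE Y) (sum_condLaw hE' Y)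

end CondLaw

section Markov

variable {ι κ α T : Type*} [Fintype ι] [DecidableEq ι] [Fintype κ] [Fintype α] [DecidableEq α]
  [DecidableEq T] {s : Set ι} {w : (ι → κ) → ℝ}

theorem condLaw_eq_sum_condLaw_mul (X : (ι → κ) → α)
    (hw : ∀ a, FactorsAcross s (fun σ => if X σ = a then w σ else 0))
    (hX : ∀ a, (∑ σ, if X σ = a then w σ else 0) ≠ 0) {E : (ι → κ) → Prop} [DecidablePred E]
    (hE : DependsOn E sᶜ) {Y : (ι → κ) → T} (hY : DependsOn Y s) (t : T) :
    condLaw w E Y t = ∑ a, condLaw w E X a * condLaw w (fun σ => X σ = a) Y t := by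
  have hcross : ∀ a, (∑ σ, if X σ = a then (if E σ ∧ Y σ = t then w σ else 0) else 0)
      = (∑ σ, if E σ ∧ X σ = a then w σ else 0) * (∑ σ, if X σ = a ∧ Y σ = t then w σ else 0)
        / ∑ σ, if X σ = a then w σ else 0 := fun a => by
    refine eq_div_of_mul_eq (hX a) ?_
    convert (hw a).sum_ite_and_mul_sum E (fun σ => Y σ = t) hE (fun σ τ h => by simp only [hY h])
      using 2 <;> refine Finset.sum_congr rfl fun σ _ => ?_ <;> simp only [ite_and] <;>
      split_ifs <;> rfl
  unfold condLaw
  rw [← sum_sum_ite_eq X, Finset.sum_div]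
  refine Finset.sum_congr rfl fun a _ => ?_
  rw [hcross a]
  ring

theorem dTV_condLaw_eq_mul (X : (ι → κ) → Bool)
    (hw : ∀ a, FactorsAcross s (fun σ => if X σ = a then w σ else 0))
    (hX : ∀ a, (∑ σ, if X σ = a then w σ else 0) ≠ 0) {E₁ E₂ : (ι → κ) → Prop}
    [DecidablePred E₁] [DecidablePred E₂] (hE₁ : DependsOn E₁ sᶜ) (hE₂ : DependsOn E₂ sᶜ)
    (h₁ : (∑ σ, if E₁ σ then w σ else 0) ≠ 0) (h₂ : (∑ σ, if E₂ σ then w σ else 0) ≠ 0)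
    [Fintype T] {Y : (ι → κ) → T} (hY : DependsOn Y s) :
    dTV (condLaw w E₁ Y) (condLaw w E₂ Y)
      = dTV (condLaw w E₁ X) (condLaw w E₂ X)
        * dTV (condLaw w (fun σ => X σ = true) Y) (condLaw w (fun σ => X σ = false) Y) := by
  have hmarkov : ∀ (E : (ι → κ) → Prop) [DecidablePred E], DependsOn E sᶜ →
      condLaw w E Y = fun t => ∑ a, condLaw w E X a * condLaw w (fun σ => X σ = a) Y t :=
    fun E _ hE => funext (condLaw_eq_sum_condLaw_mul X hw hX hE hY)
  rw [hmarkov E₁ hE₁, hmarkov E₂ hE₂]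
  refine dTV_sum_bool_mul ?_ _
  rw [← Fintype.sum_bool, ← Fintype.sum_bool, sum_condLaw h₁, sum_condLaw h₂]

theorem condLaw_eval_eq [DecidableEq κ] {w₀ : (ι → κ) → ℝ} (h₀ : FactorsAcross s w₀)
    (hpos : ∀ σ, 0 < w₀ σ) {x y : ι} (hx : x ∉ s) (hy : y ∈ s) {ψ : κ → κ → ℝ}
    (hw : ∀ σ, w σ = ψ (σ x) (σ y) * w₀ σ) (a b : κ) :
    condLaw w (fun σ => σ x = a) (fun σ => σ y) b
      = ψ a b * (∑ σ, if σ y = b then w₀ σ else 0)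
        / ∑ b', ψ a b' * ∑ σ, if σ y = b' then w₀ σ else 0 := by
  have hL := sum_ite_pos (E := fun σ => σ x = a) hpos (σ₀ := fun _ => a) rfl
  have hZ : 0 < ∑ σ, w₀ σ := Finset.sum_pos (fun σ _ => hpos σ) ⟨fun _ => a, Finset.mem_univ _⟩
  have hnum : ∀ b, (∑ σ, if σ x = a ∧ σ y = b then w σ else 0)
      = ψ a b * (∑ σ, if σ y = b then w₀ σ else 0)
        * ((∑ σ, if σ x = a then w₀ σ else 0) / ∑ σ, w₀ σ) := fun b => by
    have hcross := h₀.sum_ite_and_mul_sum (fun σ => σ x = a) (fun σ => σ y = b)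
      (fun σ τ h => by simp only [h x hx]) (fun σ τ h => by simp only [h y hy])
    calc (∑ σ, if σ x = a ∧ σ y = b then w σ else 0)
        = ψ a b * ∑ σ, if σ x = a ∧ σ y = b then w₀ σ else 0 := by
          rw [Finset.mul_sum]
          refine Finset.sum_congr rfl fun σ _ => ?_
          split_ifs with h
          · rw [hw, h.1, h.2]
          · rw [mul_zero]
      _ = _ := by
          rw [eq_div_of_mul_eq hZ.ne' hcross]
          ring
  simp only [condLaw]
  rw [← sum_sum_ite_and_eq (fun σ => σ x = a) (fun σ => σ y) w]
  simp only [hnum, ← Finset.sum_mul]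
  exact mul_div_mul_right _ _ (div_pos hL hZ).ne'

end Markov

section Edge

open Real

noncomputable def edgeKernel (β : ℝ) (m : Bool → ℝ) (a b : Bool) : ℝ :=
  exp (β * (spin a * spin b)) * m b / ∑ b', exp (β * (spin a * spin b')) * m b'

theorem abs_edgeKernel_sub_le {β : ℝ} (hβ : 0 ≤ β) {m : Bool → ℝ} (hm : ∀ b, 0 < m b) :
    |edgeKernel β m true true - edgeKernel β m false true| ≤ 1 - exp (-2 * β) := by
  have hx := hm true
  have hy := hm false
  simp only [edgeKernel, spin, Fintype.sum_bool, if_true, Bool.false_eq_true, if_false, mul_one,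
    mul_neg, neg_neg]
  set e := exp β
  set u := exp (-β)
  have heu : e * u = 1 := by rw [← exp_add]; simp
  have hu1 : u ≤ 1 := exp_le_one_iff.mpr (by linarith)
  have hue : u ^ 2 ≤ e ^ 2 := by nlinarith [exp_pos (-β), one_le_exp hβ]
  have hd1 : 0 < e * m true + u * m false := by positivity
  have hd2 : 0 < u * m true + e * m false := by positivity
  have hD : e * m true / (e * m true + u * m false) - u * m true / (u * m true + e * m false)
      = m true * m false * (e ^ 2 - u ^ 2)
        / ((e * m true + u * m false) * (u * m true + e * m false)) := by
    rw [div_sub_div _ _ hd1.ne' hd2.ne']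
    ring
  have hgap : (1 - u ^ 2) * ((e * m true + u * m false) * (u * m true + e * m false))
        - m true * m false * (e ^ 2 - u ^ 2)
      = (1 - u ^ 2) * ((m true - m false) ^ 2 + m true * m false * (1 + u ^ 2)) := by
    linear_combination ((1 - u ^ 2) * (m true ^ 2 + m false ^ 2)
      - m true * m false * (e * u + 1)) * heu
  have hgap_nonneg :
      0 ≤ (1 - u ^ 2) * ((m true - m false) ^ 2 + m true * m false * (1 + u ^ 2)) := by
    have : u ^ 2 ≤ 1 := pow_le_one₀ (exp_pos _).le hu1
    positivity
  have h2 : exp (-2 * β) = u ^ 2 := by rw [← exp_nat_mul]; ring_nf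
  rw [h2, hD, abs_of_nonneg (div_nonneg (mul_nonneg (mul_pos hx hy).le (sub_nonneg.2 hue))
    (by positivity)), div_le_iff₀ (by positivity)]
  linarith

theorem dTV_edgeKernel_le {β : ℝ} (hβ : 0 ≤ β) {m : Bool → ℝ} (hm : ∀ b, 0 < m b) :
    dTV (edgeKernel β m true) (edgeKernel β m false) ≤ 1 - exp (-2 * β) := by
  have hsum : ∀ a, edgeKernel β m a true + edgeKernel β m a false = 1 := fun a => by
    have := hm true
    have := hm false
    rw [edgeKernel, edgeKernel, ← add_div, Fintype.sum_bool, div_self]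
    cases a <;> simp only [spin] <;> positivity
  rw [dTV_eq_abs_sub_of_bool (by rw [hsum, hsum])]
  exact abs_edgeKernel_sub_le hβ hm

theorem dTV_condLaw_le_mul_of_edge {ι : Type*} [Fintype ι] [DecidableEq ι] {s : Set ι} {β : ℝ}
    (hβ : 0 ≤ β) {w w₀ : (ι → Bool) → ℝ} (h₀ : FactorsAcross s w₀) (hw₀ : ∀ σ, 0 < w₀ σ) {x y a : ι}
    (hx : x ∉ s) (hy : y ∈ s) (ha : a ∉ s)
    (hw : ∀ σ, w σ = exp (β * (spin (σ x) * spin (σ y))) * w₀ σ) {T : Type*} [Fintype T]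
    [DecidableEq T] {Y : (ι → Bool) → T} (hY : DependsOn Y s) :
    dTV (condLaw w (fun σ => σ a = true) Y) (condLaw w (fun σ => σ a = false) Y)
      ≤ (1 - exp (-2 * β))
        * dTV (condLaw w (fun σ => σ a = true) (fun σ => σ x))
          (condLaw w (fun σ => σ a = false) (fun σ => σ x)) := by
  have hwpos : ∀ σ, 0 < w σ := fun σ => by rw [hw]; exact mul_pos (exp_pos _) (hw₀ σ)
  have hmass : ∀ (v : ι) (b : Bool), (∑ σ, if σ v = b then w σ else 0) ≠ 0 := fun v b =>
    (sum_ite_pos (E := fun σ => σ v = b) hwpos (σ₀ := fun _ => b) rfl).ne'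
  have ha' : ∀ b : Bool, DependsOn (fun σ : ι → Bool => σ a = b) sᶜ :=
    fun b σ τ h => congrArg (· = b) (h a ha)
  have hψ := condLaw_eval_eq h₀ hw₀ hx hy (ψ := fun a b => exp (β * (spin a * spin b))) hw
  have hkernel : dTV (condLaw w (fun σ => σ x = true) (fun σ => σ y))
      (condLaw w (fun σ => σ x = false) (fun σ => σ y)) ≤ 1 - exp (-2 * β) := by
    rw [funext (hψ true), funext (hψ false)]
    exact dTV_edgeKernel_le hβ fun b => sum_ite_pos hw₀ (σ₀ := fun _ => b) rfl
  rw [dTV_condLaw_eq_mul (fun σ => σ y)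
      (h₀.ite_eval_eq (x := y) (y := x) (ψ := fun b a => exp (β * (spin a * spin b))) hw)
      (hmass y) (ha' true) (ha' false) (hmass a true) (hmass a false) hY,
    dTV_condLaw_eq_mul (fun σ => σ x)
      (h₀.ite_eval_eq (x := x) (y := y) (ψ := fun a b => exp (β * (spin a * spin b))) hw)
      (hmass x) (ha' true) (ha' false) (hmass a true) (hmass a false) (fun σ τ h => h y hy)]
  have hε : 0 ≤ 1 - exp (-2 * β) := sub_nonneg.2 (exp_le_one_iff.2 (by linarith))
  have hK := dTV_condLaw_le_one (fun σ => (hwpos σ).le) (hmass y true) (hmass y false) Y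
  exact (mul_le_mul (mul_le_mul_of_nonneg_left hkernel (dTV_nonneg _ _)) hK (dTV_nonneg _ _)
    (mul_nonneg (dTV_nonneg _ _) hε)).trans_eq (by ring)

end Edge

section Tree

variable {n : ℕ}

theorem val_fst_par (v : Vtx n) : ((par v).1 : ℕ) = v.1 - 1 := by
  unfold par
  split_ifs with h
  · omega
  · rfl

theorem val_fst_iterate_par (m : ℕ) (v : Vtx n) : ((par^[m] v).1 : ℕ) = v.1 - m := by
  induction m generalizing v with
  | zero => rfl
  | succ m ih => rw [Function.iterate_succ_apply, ih, val_fst_par]; omega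

def descendants (c : Vtx n) : Set (Vtx n) := {v | ∃ m, par^[m] v = c}

theorem mem_descendants_self (c : Vtx n) : c ∈ descendants c := ⟨0, rfl⟩

theorem par_notMem_descendants {c : Vtx n} (hc : ¬ isRoot c) : par c ∉ descendants c := by
  rintro ⟨m, hm⟩
  have := congrArg (fun v : Vtx n => (v.1 : ℕ)) hm
  simp only [val_fst_iterate_par, val_fst_par] at this
  exact hc (by unfold isRoot; omega)

theorem par_mem_descendants_iff {c v : Vtx n} (hv : v ≠ c) :
    par v ∈ descendants c ↔ v ∈ descendants c := by
  constructor
  · rintro ⟨m, hm⟩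
    exact ⟨m + 1, hm⟩
  · rintro ⟨_ | m, hm⟩
    · exact absurd hm hv
    · exact ⟨m, hm⟩

theorem exists_child_of_adj {u v : Vtx n} (h : Adj u v) :
    ∃ c, ¬ isRoot c ∧ s(u, v) = s(c, par c) := by
  rcases h with ⟨hu, rfl⟩ | ⟨hv, rfl⟩
  · exact ⟨u, hu, rfl⟩
  · exact ⟨v, hv, Sym2.eq_swap⟩

theorem mem_descendants_iff_of_adj {c u v : Vtx n} (h : Adj u v) (hne : s(u, v) ≠ s(c, par c)) :
    u ∈ descendants c ↔ v ∈ descendants c := by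
  rcases h with ⟨-, rfl⟩ | ⟨-, rfl⟩
  · exact (par_mem_descendants_iff fun h => hne (by rw [h])).symm
  · exact par_mem_descendants_iff fun h => hne (by rw [h, Sym2.eq_swap])

noncomputable def bond (σ : Vtx n → Bool) (v : Vtx n) : ℝ :=
  if isRoot v then 0 else spin (σ v) * spin (σ (par v))

open Classical in
theorem bond_piecewise_add {c v : Vtx n} (hv : v ≠ c) (σ τ : Vtx n → Bool) :
    bond ((descendants c).piecewise τ σ) v + bond ((descendants c).piecewise σ τ) v
      = bond σ v + bond τ v := by
  unfold bond
  split_ifs with hr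
  · rfl
  · have hpar := par_mem_descendants_iff hv
    by_cases hd : v ∈ descendants c
    · simp only [Set.piecewise_eq_of_mem _ _ _ hd, Set.piecewise_eq_of_mem _ _ _ (hpar.2 hd)]
      exact add_comm _ _
    · simp only [Set.piecewise_eq_of_notMem _ _ _ hd,
        Set.piecewise_eq_of_notMem _ _ _ (mt hpar.1 hd)]

variable (β δ : ℝ) (nobs : Vtx n → ℕ) (z : (v : Vtx n) → Fin (nobs v) → Bool)

noncomputable def cutWeight (c : Vtx n) (σ : Vtx n → Bool) : ℝ :=
  Real.exp (β * ∑ v ∈ univ.erase c, bond σ v) * ∏ v, hlik δ nobs z v (σ v)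

theorem factorsAcross_cutWeight (c : Vtx n) :
    FactorsAcross (descendants c) (cutWeight β δ nobs z c) := by
  refine FactorsAcross.mul (fun σ τ => ?_) (factorsAcross_prod _ _)
  simp only [← Real.exp_add, ← mul_add, ← Finset.sum_add_distrib]
  congr 2
  exact Finset.sum_congr rfl fun v hv => bond_piecewise_add (Finset.ne_of_mem_erase hv) σ τ

theorem postW_eq_exp_bond_mul_cutWeight (c : Vtx n) (σ : Vtx n → Bool) :
    postW β δ nobs z σ = Real.exp (β * bond σ c) * cutWeight β δ nobs z c σ := by
  have : postW β δ nobs z σ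
      = Real.exp (β * ∑ v, bond σ v) * ∏ v, hlik δ nobs z v (σ v) := rfl
  rw [this, cutWeight, ← Finset.add_sum_erase _ _ (Finset.mem_univ c), mul_add, Real.exp_add,
    mul_assoc]

variable {δ} in
theorem cutWeight_pos (hδ : δ ∈ Set.Ioo 0 1) (c : Vtx n) (σ : Vtx n → Bool) :
    0 < cutWeight β δ nobs z c σ := by
  refine mul_pos (Real.exp_pos _) (Finset.prod_pos fun v _ => Finset.prod_pos fun j _ => ?_)
  split_ifs
  · exact sub_pos.2 hδ.2
  · exact hδ.1

variable {δ} in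
theorem postW_pos (hδ : δ ∈ Set.Ioo 0 1) (σ : Vtx n → Bool) : 0 < postW β δ nobs z σ := by
  rw [postW_eq_exp_bond_mul_cutWeight β δ nobs z (root n)]
  exact mul_pos (Real.exp_pos _) (cutWeight_pos β nobs z hδ _ σ)

end Tree

theorem iff_iff_lt_of_forall_iff_succ {p : ℕ → Prop} {k i : ℕ} (hi : i + 1 < k)
    (hflip : p i ↔ ¬ p (i + 1)) (hstep : ∀ m, m + 1 < k → m ≠ i → (p m ↔ p (m + 1)))
    {m : ℕ} (hm : m < k) : (p m ↔ p (i + 1)) ↔ i < m := by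
  rcases le_or_gt m i with hmi | hmi
  · have hlow : ∀ d m, m + d = i → (p m ↔ p i) := by
      intro d
      induction d with
      | zero => intro m h; obtain rfl : m = i := h; rfl
      | succ d ih => intro m h; exact (hstep m (by omega) (by omega)).trans (ih (m + 1) (by omega))
    rw [hlow (i - m) m (by omega)]
    simp only [hflip, iff_false_intro (Nat.not_lt.2 hmi)]
    tauto
  · have hhigh : ∀ m, i + 1 ≤ m → m < k → (p m ↔ p (i + 1)) := by
      intro m hm
      induction m, hm using Nat.le_induction with
      | base => intro _; rfl
      | succ m hm ih => intro hk; exact (hstep m (by omega) (by omega)).symm.trans (ih (by omega))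
    simp only [hhigh m hmi hm, hmi]

section Path

variable {n : ℕ} (β : ℝ) {δ : ℝ} (nobs : Vtx n → ℕ) (z : (v : Vtx n) → Fin (nobs v) → Bool)
  {k : ℕ} {γ : Fin k → Vtx n}

theorem exists_split_at_path_edge (hδ : δ ∈ Set.Ioo 0 1) (hinj : Function.Injective γ)
    (hpath : ∀ (i : ℕ) (h : i + 1 < k), Adj (γ ⟨i, Nat.lt_of_succ_lt h⟩) (γ ⟨i + 1, h⟩))
    {i : ℕ} (hi : i + 1 < k) :
    ∃ (s : Set (Vtx n)) (w₀ : (Vtx n → Bool) → ℝ), FactorsAcross s w₀ ∧ (∀ σ, 0 < w₀ σ) ∧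
      (∀ σ, postW β δ nobs z σ = Real.exp (β * (spin (σ (γ ⟨i, Nat.lt_of_succ_lt hi⟩))
        * spin (σ (γ ⟨i + 1, hi⟩)))) * w₀ σ) ∧
      ∀ m (hm : m < k), γ ⟨m, hm⟩ ∈ s ↔ i < m := by
  obtain ⟨c, hc, hedge⟩ := exists_child_of_adj (hpath i hi)
  set x := γ ⟨i, Nat.lt_of_succ_lt hi⟩
  set y := γ ⟨i + 1, hi⟩
  have hbond : ∀ σ, bond σ c = spin (σ x) * spin (σ y) := fun σ => by
    rw [bond, if_neg hc]
    rcases Sym2.eq_iff.1 hedge with ⟨hx, hy⟩ | ⟨hx, hy⟩ <;> rw [hx, hy]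
    exact mul_comm _ _
  have hflip : x ∈ descendants c ↔ y ∉ descendants c := by
    have := mem_descendants_self c
    have := par_notMem_descendants hc
    rcases Sym2.eq_iff.1 hedge with ⟨hx, hy⟩ | ⟨hx, hy⟩ <;> rw [hx, hy] <;> tauto
  have hstep : ∀ m (hm : m + 1 < k), m ≠ i →
      (γ ⟨m, Nat.lt_of_succ_lt hm⟩ ∈ descendants c ↔ γ ⟨m + 1, hm⟩ ∈ descendants c) := by
    refine fun m hm hmi => mem_descendants_iff_of_adj (hpath m hm) fun h => hmi ?_
    rw [← hedge, Sym2.eq_iff] at h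
    rcases h with ⟨h₁, -⟩ | ⟨h₁, h₂⟩
    · simpa using hinj h₁
    · have := congrArg Fin.val (hinj h₁)
      have := congrArg Fin.val (hinj h₂)
      simp only at *
      omega
  refine ⟨{v | v ∈ descendants c ↔ y ∈ descendants c}, cutWeight β δ nobs z c, ?_,
    cutWeight_pos β nobs z hδ c, fun σ => by rw [postW_eq_exp_bond_mul_cutWeight, hbond], ?_⟩
  · by_cases hy : y ∈ descendants c
    · convert factorsAcross_cutWeight β δ nobs z c
      ext v
      simp [hy]
    · convert (factorsAcross_cutWeight β δ nobs z c).compl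
      ext v
      simp [hy]
  · intro m hm
    let p : ℕ → Prop := fun m => ∀ hm : m < k, γ ⟨m, hm⟩ ∈ descendants c
    have hp : ∀ m (hm : m < k), p m ↔ γ ⟨m, hm⟩ ∈ descendants c :=
      fun m hm => ⟨fun h => h hm, fun h _ => h⟩
    have := iff_iff_lt_of_forall_iff_succ (p := p) hi
      (by rw [hp i (by omega), hp (i + 1) hi]; exact hflip)
      (fun m hm' hmi => by rw [hp m (by omega), hp (m + 1) hm']; exact hstep m hm' hmi) hm
    rwa [hp m hm, hp (i + 1) hi] at this

end Path

section Contraction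

open Real

variable {n : ℕ} {β δ : ℝ} (nobs : Vtx n → ℕ) (z : (v : Vtx n) → Fin (nobs v) → Bool) {k : ℕ}
  {γ : Fin k → Vtx n}

theorem dTV_condLaw_postW_le (hβ : 0 ≤ β) (hδ : δ ∈ Set.Ioo 0 1) (hinj : Function.Injective γ)
    (hpath : ∀ (i : ℕ) (h : i + 1 < k), Adj (γ ⟨i, Nat.lt_of_succ_lt h⟩) (γ ⟨i + 1, h⟩))
    (hk : 0 < k) (J : ℕ) (hJ : J < k) {T : Type} [Fintype T] [DecidableEq T]
    {Y : (Vtx n → Bool) → T} (hY : DependsOn Y (γ '' {m | J ≤ (m : ℕ)})) :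
    dTV (condLaw (postW β δ nobs z) (fun σ => σ (γ ⟨0, hk⟩) = true) Y)
      (condLaw (postW β δ nobs z) (fun σ => σ (γ ⟨0, hk⟩) = false) Y)
      ≤ (1 - exp (-2 * β)) ^ J := by
  have hmass : ∀ e : Bool, (∑ σ, if σ (γ ⟨0, hk⟩) = e then postW β δ nobs z σ else 0) ≠ 0 :=
    fun e => (sum_ite_pos (E := fun σ => σ (γ ⟨0, hk⟩) = e) (postW_pos β nobs z hδ)
      (σ₀ := fun _ => e) rfl).ne'
  induction J generalizing T with
  | zero =>
    rw [pow_zero]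
    exact dTV_condLaw_le_one (fun σ => (postW_pos β nobs z hδ σ).le) (hmass true) (hmass false) Y
  | succ J ih =>
    obtain ⟨s, w₀, h₀, hw₀, hfac, hs⟩ := exists_split_at_path_edge β nobs z hδ hinj hpath hJ
    have hnotMem : ∀ m (hm : m < k), m ≤ J → γ ⟨m, hm⟩ ∉ s :=
      fun m hm hmJ h => by have := (hs m hm).1 h; omega
    have hYs : DependsOn Y s := hY.mono <| by
      rintro _ ⟨m, hm, rfl⟩
      exact (hs m m.2).2 (by have : J + 1 ≤ (m : ℕ) := hm; omega)
    calc _ ≤ (1 - exp (-2 * β)) * dTV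
          (condLaw (postW β δ nobs z) (fun σ => σ (γ ⟨0, hk⟩) = true) (fun σ => σ (γ ⟨J, _⟩)))
          (condLaw (postW β δ nobs z) (fun σ => σ (γ ⟨0, hk⟩) = false) (fun σ => σ (γ ⟨J, _⟩))) :=
          dTV_condLaw_le_mul_of_edge hβ h₀ hw₀ (hnotMem J _ le_rfl) ((hs _ hJ).2 J.lt_succ_self)
            (hnotMem 0 hk J.zero_le) hfac hYs
      _ ≤ (1 - exp (-2 * β)) * (1 - exp (-2 * β)) ^ J :=
          mul_le_mul_of_nonneg_left (ih (Nat.lt_of_succ_lt hJ) fun σ τ h => h _ ⟨_, le_refl J, rfl⟩)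
            (sub_nonneg.2 (exp_le_one_iff.2 (by linarith)))
      _ = _ := (pow_succ' _ _).symm

end Contraction

/-- For the tree-based Ising posterior `μ(·|Z)` and a path `γ₁,…,γ_k`
in the tree, let `σ^{(+)}` (resp. `σ^{(−)}`) be distributed as `μ(·|Z)` conditioned on
`σ(γ₁) = +1` (resp. `σ(γ₁) = −1`).  Then for every `1 ≤ j ≤ k`,
`d_TV(law(σ^{(+)}(γ_j),…,σ^{(+)}(γ_k)), law(σ^{(−)}(γ_j),…,σ^{(−)}(γ_k))) ≤ (1−ε_β)^{j−1}`
with `ε_β = e^{−6β}`.  (Spins `±1` are modelled by `Bool`, `true ↦ +1`.) -/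
theorem stmt4 (n : ℕ) (β δ : ℝ) (hβ : 0 < β) (hδ : δ ∈ Set.Ioo (0 : ℝ) (1/2))
    (nobs : Vtx n → ℕ) (z : (v : Vtx n) → Fin (nobs v) → Bool)
    (k : ℕ) (γ : Fin k → Vtx n) (hinj : Function.Injective γ)
    (hpath : ∀ (i : ℕ) (h : i + 1 < k), Adj (γ ⟨i, by omega⟩) (γ ⟨i + 1, h⟩))
    (j : ℕ) (hj1 : 1 ≤ j) (hjk : j ≤ k) :
    dTV
      (fun t : Fin (k - j + 1) → Bool =>
        (∑ σ : Vtx n → Bool,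
            if σ (γ ⟨0, by omega⟩) = true ∧
                (∀ m : Fin (k - j + 1), σ (γ ⟨j - 1 + m.1, by have := m.2; omega⟩) = t m)
              then post β δ nobs z σ else 0) /
        (∑ σ : Vtx n → Bool, if σ (γ ⟨0, by omega⟩) = true then post β δ nobs z σ else 0))
      (fun t : Fin (k - j + 1) → Bool =>
        (∑ σ : Vtx n → Bool,
            if σ (γ ⟨0, by omega⟩) = false ∧
                (∀ m : Fin (k - j + 1), σ (γ ⟨j - 1 + m.1, by have := m.2; omega⟩) = t m)
              then post β δ nobs z σ else 0) /
        (∑ σ : Vtx n → Bool, if σ (γ ⟨0, by omega⟩) = false then post β δ nobs z σ else 0))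
    ≤ (1 - Real.exp (-6 * β)) ^ (j - 1) := by
  have hδ' : δ ∈ Set.Ioo 0 1 := ⟨hδ.1, by linarith [hδ.2]⟩
  have hk : 0 < k := by omega
  let Y : (Vtx n → Bool) → Fin (k - j + 1) → Bool :=
    fun σ m => σ (γ ⟨j - 1 + m.1, by have := m.2; omega⟩)
  have hpost : post β δ nobs z = fun σ => postW β δ nobs z σ / ∑ τ, postW β δ nobs z τ := rfl
  have hZ : (∑ τ, postW β δ nobs z τ) ≠ 0 :=
    (Finset.sum_pos (fun σ _ => postW_pos β nobs z hδ' σ) Finset.univ_nonempty).ne'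
  calc _ = dTV (condLaw (post β δ nobs z) (fun σ => σ (γ ⟨0, hk⟩) = true) Y)
        (condLaw (post β δ nobs z) (fun σ => σ (γ ⟨0, hk⟩) = false) Y) := by
        congr 1 <;> funext t <;> simp only [condLaw, Y, funext_iff]
    _ = dTV (condLaw (postW β δ nobs z) (fun σ => σ (γ ⟨0, hk⟩) = true) Y)
        (condLaw (postW β δ nobs z) (fun σ => σ (γ ⟨0, hk⟩) = false) Y) := by
        rw [hpost, condLaw_div_const hZ, condLaw_div_const hZ]
    _ ≤ (1 - Real.exp (-2 * β)) ^ (j - 1) :=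
        dTV_condLaw_postW_le nobs z hβ.le hδ' hinj hpath hk (j - 1) (by omega)
          fun σ τ h => funext fun m => h _ ⟨⟨j - 1 + m.1, _⟩, Nat.le_add_right _ _, rfl⟩
    _ ≤ (1 - Real.exp (-6 * β)) ^ (j - 1) := by
        refine pow_le_pow_left₀ (sub_nonneg.2 (Real.exp_le_one_iff.2 (by linarith))) ?_ _
        gcongr
        linarith
end

section
/- Fix p ∈ (0,1/2). There exists N ∈ ℕ such that for all n ≥ N, the mixing time of the chain Q_{n,p} satisfies τ_mix(Q_{n,p}) ≥ n/2. -/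
/-- The birth-and-death kernel `Q_{n,p}` on the states `{1,…,n}` (modelled by `Fin n`,
with `i : Fin n` representing the state `i+1`):
`Q(i,i+1) = p/2` for `i < n`, `Q(i,i−1) = (1−p)/2` for `i > 1`, `Q(i,i) = 1/2` for
`1 < i < n`, `Q(1,1) = (2−p)/2`, `Q(n,n) = (1+p)/2`. -/
noncomputable def Qnp (n : ℕ) (p : ℝ) : Fin n → Fin n → ℝ := fun i j =>
  if (j : ℕ) = (i : ℕ) + 1 ∧ (i : ℕ) + 1 < n then p / 2
  else if (j : ℕ) + 1 = (i : ℕ) then (1 - p) / 2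
  else if j = i then
    (if (i : ℕ) = 0 then (2 - p) / 2 else if (i : ℕ) + 1 = n then (1 + p) / 2 else 1 / 2)
  else 0

/-- The perturbed kernel `K_{n,p,ε}(i,j) = (1−ε) Q_{n,p}(i,j) + ε·1_{{j=n}}`. -/
noncomputable def Knpe (n : ℕ) (p ε : ℝ) : Fin n → Fin n → ℝ := fun i j =>
  (1 - ε) * Qnp n p i j + (if (j : ℕ) + 1 = n then ε else 0)

/-- `t`-step transition probabilities of a kernel on a finite state space. -/
noncomputable def kpow {n : ℕ} (P : Fin n → Fin n → ℝ) : ℕ → Fin n → Fin n → ℝ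
  | 0 => fun i j => if i = j then 1 else 0
  | t + 1 => fun i j => ∑ l, kpow P t i l * P l j

/-- The mixing time `τ_mix(P) = min{t : sup_i d_TV(P^t(i,·), π) < 1/4}`. -/
noncomputable def mixTime {n : ℕ} (P : Fin n → Fin n → ℝ) (pi : Fin n → ℝ) : ℕ :=
  sInf {t : ℕ | ∀ i, dTV (kpow P t i) pi < 1/4}

namespace kpow

variable {n : ℕ} {P : Fin n → Fin n → ℝ} {π : Fin n → ℝ}

lemma zero_apply (i j : Fin n) : kpow P 0 i j = if i = j then 1 else 0 := rfl

lemma succ_apply (t : ℕ) (i j : Fin n) : kpow P (t + 1) i j = ∑ l, kpow P t i l * P l j := rfl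

lemma nonneg (hP : ∀ i j, 0 ≤ P i j) : ∀ t (i j : Fin n), 0 ≤ kpow P t i j
  | 0, i, j => by rw [zero_apply]; split_ifs <;> norm_num
  | t + 1, i, j => Finset.sum_nonneg fun l _ => mul_nonneg (nonneg hP t i l) (hP l j)

lemma sum_eq_one (hP : ∀ i, ∑ j, P i j = 1) : ∀ t (i : Fin n), ∑ j, kpow P t i j = 1
  | 0, i => by simp [zero_apply]
  | t + 1, i => by
    simp only [succ_apply]
    rw [Finset.sum_comm]
    simp only [← Finset.mul_sum, hP, mul_one, sum_eq_one hP t i]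

lemma le_one (hP0 : ∀ i j, 0 ≤ P i j) (hP : ∀ i, ∑ j, P i j = 1) (t : ℕ) (i j : Fin n) :
    kpow P t i j ≤ 1 :=
  sum_eq_one hP t i ▸ Finset.single_le_sum (fun l _ => nonneg hP0 t i l) (Finset.mem_univ j)

lemma mul_le_succ (hP : ∀ i j, 0 ≤ P i j) (t : ℕ) (i l j : Fin n) :
    kpow P t i l * P l j ≤ kpow P (t + 1) i j :=
  Finset.single_le_sum (f := fun l => kpow P t i l * P l j)
    (fun l _ => mul_nonneg (nonneg hP t i l) (hP l j)) (Finset.mem_univ l)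

lemma add_apply (s : ℕ) : ∀ t (i j : Fin n), kpow P (s + t) i j = ∑ l, kpow P s i l * kpow P t l j
  | 0, i, j => by simp [zero_apply]
  | t + 1, i, j => by
    simp only [← add_assoc, succ_apply, add_apply s t, Finset.sum_mul, Finset.mul_sum, mul_assoc]
    exact Finset.sum_comm

lemma sum_stationary (hstat : ∀ j, ∑ i, π i * P i j = π j) :
    ∀ t (j : Fin n), ∑ i, π i * kpow P t i j = π j
  | 0, j => by simp [zero_apply]
  | t + 1, j => by
    simp only [succ_apply, Finset.mul_sum, ← mul_assoc]
    rw [Finset.sum_comm]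
    simp only [← Finset.sum_mul, sum_stationary hstat t, hstat]

end kpow

lemma sum_le_two_mul_dTV_of_eq_zero {α : Type*} [Fintype α] {μ ν : α → ℝ} {A : Finset α}
    (hμ : ∀ j ∈ A, μ j = 0) (hν : ∀ j, 0 ≤ ν j) : ∑ j ∈ A, ν j ≤ 2 * dTV μ ν := by
  unfold dTV
  calc ∑ j ∈ A, ν j = ∑ j ∈ A, |μ j - ν j| :=
        Finset.sum_congr rfl fun j hj => by rw [hμ j hj, zero_sub, abs_neg, abs_of_nonneg (hν j)]
    _ ≤ ∑ j, |μ j - ν j| :=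
        Finset.sum_le_sum_of_subset_of_nonneg A.subset_univ fun j _ _ => abs_nonneg _
    _ = 2 * ((∑ j, |μ j - ν j|) / 2) := by ring

section Doeblin

variable {n : ℕ} {P : Fin n → Fin n → ℝ} {π : Fin n → ℝ}

lemma sum_abs_mul_sub_le_of_minorization {μ : Fin n → ℝ} {δ : ℝ}
    (hminor : ∀ l j, δ * π j ≤ P l j) (hP : ∀ l, ∑ j, P l j = 1) (hπ : ∑ j, π j = 1)
    (hstat : ∀ j, ∑ l, π l * P l j = π j) (hμ : ∑ l, μ l = 1) :
    ∑ j, |∑ l, μ l * P l j - π j| ≤ (1 - δ) * ∑ l, |μ l - π l| := by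
  have hcentre : ∀ j, ∑ l, μ l * P l j - π j = ∑ l, (μ l - π l) * (P l j - δ * π j) := by
    intro j
    simp only [sub_mul, mul_sub, Finset.sum_sub_distrib, ← Finset.sum_mul, hμ, hπ, hstat]
    ring
  calc ∑ j, |∑ l, μ l * P l j - π j|
      ≤ ∑ j, ∑ l, |μ l - π l| * (P l j - δ * π j) := by
        refine Finset.sum_le_sum fun j _ => (hcentre j ▸ Finset.abs_sum_le_sum_abs _ _).trans ?_
        refine Finset.sum_le_sum fun l _ => ?_
        rw [abs_mul, abs_of_nonneg (sub_nonneg.2 (hminor l j))]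
    _ = (1 - δ) * ∑ l, |μ l - π l| := by
        rw [Finset.sum_comm, Finset.mul_sum]
        refine Finset.sum_congr rfl fun l _ => ?_
        rw [← Finset.mul_sum, Finset.sum_sub_distrib, hP, ← Finset.mul_sum, hπ, mul_one, mul_comm]

variable (hP0 : ∀ i j, 0 ≤ P i j) (hP : ∀ i, ∑ j, P i j = 1)
  (hπ0 : ∀ i, 0 ≤ π i) (hπ : ∑ i, π i = 1) (hstat : ∀ j, ∑ i, π i * P i j = π j)
include hP0 hP hπ0 hπ hstat

lemma sum_abs_kpow_mul_sub_le {m : ℕ} {δ : ℝ} (hδ : δ ≤ 1)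
    (hminor : ∀ l j, δ * π j ≤ kpow P m l j) :
    ∀ k (i : Fin n), ∑ j, |kpow P (m * k) i j - π j| ≤ (1 - δ) ^ k * 2
  | 0, i => by
    calc ∑ j, |kpow P 0 i j - π j| ≤ ∑ j, (kpow P 0 i j + π j) :=
          Finset.sum_le_sum fun j _ => (abs_sub _ _).trans <| by
            rw [abs_of_nonneg (kpow.nonneg hP0 0 i j), abs_of_nonneg (hπ0 j)]
      _ = (1 - δ) ^ 0 * 2 := by
          rw [Finset.sum_add_distrib, kpow.sum_eq_one hP 0 i, hπ]; norm_num
  | k + 1, i => by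
    simp only [Nat.mul_succ, kpow.add_apply]
    calc _ ≤ (1 - δ) * ∑ l, |kpow P (m * k) i l - π l| :=
          sum_abs_mul_sub_le_of_minorization hminor (kpow.sum_eq_one hP m) hπ
            (kpow.sum_stationary hstat m) (kpow.sum_eq_one hP _ i)
      _ ≤ (1 - δ) * ((1 - δ) ^ k * 2) :=
          mul_le_mul_of_nonneg_left (sum_abs_kpow_mul_sub_le hδ hminor k i) (by linarith)
      _ = (1 - δ) ^ (k + 1) * 2 := by ring

lemma exists_forall_dTV_kpow_lt {m : ℕ} (hpos : ∀ i j, 0 < kpow P m i j) {ε : ℝ} (hε : 0 < ε) :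
    ∃ t, ∀ i, dTV (kpow P t i) π < ε := by
  rcases isEmpty_or_nonempty (Fin n) with hn | hn
  · exact ⟨0, isEmptyElim⟩
  obtain ⟨⟨i₀, j₀⟩, hmin⟩ := Finite.exists_min fun x : Fin n × Fin n => kpow P m x.1 x.2
  set δ := kpow P m i₀ j₀
  have hminor : ∀ l j, δ * π j ≤ kpow P m l j := fun l j =>
    calc δ * π j ≤ δ * 1 :=
          mul_le_mul_of_nonneg_left
            (hπ ▸ Finset.single_le_sum (fun i _ => hπ0 i) (Finset.mem_univ j)) (hpos i₀ j₀).le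
      _ ≤ kpow P m l j := (mul_one δ).symm ▸ hmin (l, j)
  obtain ⟨k, hk⟩ := exists_pow_lt_of_lt_one hε (sub_lt_self 1 (hpos i₀ j₀))
  refine ⟨m * k, fun i => ?_⟩
  have := sum_abs_kpow_mul_sub_le hP0 hP hπ0 hπ hstat (kpow.le_one hP0 hP m i₀ j₀) hminor k i
  unfold dTV
  linarith

end Doeblin

section NearestNeighbour

variable {n : ℕ} {P : Fin n → Fin n → ℝ} {π : Fin n → ℝ}

lemma sum_flux_out_eq_sum_flux_in (hP : ∀ i, ∑ j, P i j = 1)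
    (hstat : ∀ j, ∑ i, π i * P i j = π j) (A : Finset (Fin n)) :
    ∑ i ∈ A, ∑ j ∈ Aᶜ, π i * P i j = ∑ i ∈ Aᶜ, ∑ j ∈ A, π i * P i j := by
  have hout : ∑ i ∈ A, π i = ∑ i ∈ A, ∑ j ∈ A, π i * P i j + ∑ i ∈ A, ∑ j ∈ Aᶜ, π i * P i j := by
    rw [← Finset.sum_add_distrib]
    refine Finset.sum_congr rfl fun i _ => ?_
    rw [Finset.sum_add_sum_compl, ← Finset.mul_sum, hP, mul_one]
  have hin : ∑ j ∈ A, π j = ∑ i ∈ A, ∑ j ∈ A, π i * P i j + ∑ i ∈ Aᶜ, ∑ j ∈ A, π i * P i j := by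
    rw [Finset.sum_add_sum_compl, Finset.sum_comm]
    exact Finset.sum_congr rfl fun j _ => (hstat j).symm
  linarith

lemma detailed_balance_of_stationary (hP : ∀ i, ∑ j, P i j = 1)
    (hstat : ∀ j, ∑ i, π i * P i j = π j)
    (hnn : ∀ i j : Fin n, (i : ℕ) + 1 < j ∨ (j : ℕ) + 1 < i → P i j = 0)
    {i j : Fin n} (hij : (j : ℕ) = i + 1) : π i * P i j = π j * P j i := by
  -- Only the edge `(i, j)` crosses the cut `{l | l ≤ i}`, in either direction.
  set A := Finset.Iic i
  have hiA : i ∈ A := Finset.mem_Iic.2 le_rfl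
  have hjA : j ∈ Aᶜ := by simp [A, Fin.le_def, hij]
  have hfar : ∀ l ∈ A, ∀ m ∈ Aᶜ, m ≠ j ∨ l ≠ i → P l m = 0 ∧ P m l = 0 := by
    intro l hl m hm hne
    simp only [A, Finset.mem_compl, Finset.mem_Iic, Fin.le_def, not_le, ne_eq, Fin.ext_iff]
      at hl hm hne
    exact ⟨hnn l m (by omega), hnn m l (by omega)⟩
  have hout : ∑ l ∈ A, ∑ m ∈ Aᶜ, π l * P l m = π i * P i j := by
    rw [Finset.sum_eq_single_of_mem i hiA fun l hl hli => Finset.sum_eq_zero fun m hm => by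
      rw [(hfar l hl m hm (.inr hli)).1, mul_zero]]
    exact Finset.sum_eq_single_of_mem j hjA fun m hm hmj => by
      rw [(hfar i hiA m hm (.inl hmj)).1, mul_zero]
  have hin : ∑ l ∈ Aᶜ, ∑ m ∈ A, π l * P l m = π j * P j i := by
    rw [Finset.sum_eq_single_of_mem j hjA fun l hl hlj => Finset.sum_eq_zero fun m hm => by
      rw [(hfar m hm l hl (.inl hlj)).2, mul_zero]]
    exact Finset.sum_eq_single_of_mem i hiA fun m hm hmi => by
      rw [(hfar m hm j hjA (.inr hmi)).2, mul_zero]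
  rw [← hout, ← hin, sum_flux_out_eq_sum_flux_in hP hstat]

lemma kpow.eq_zero_of_add_lt (hP : ∀ i j : Fin n, (j : ℕ) + 1 < i → P i j = 0) :
    ∀ t (i j : Fin n), (j : ℕ) + t < i → kpow P t i j = 0
  | 0, i, j, h => if_neg (Fin.ne_of_val_ne (by omega))
  | t + 1, i, j, h => Finset.sum_eq_zero fun l _ => by
    by_cases hl : (l : ℕ) + t < i
    · rw [kpow.eq_zero_of_add_lt hP t i l hl, zero_mul]
    · rw [hP l j (by omega), mul_zero]

lemma kpow.pos_of_le_add (hP0 : ∀ i j, 0 ≤ P i j) (hdiag : ∀ i, 0 < P i i)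
    (hup : ∀ i j : Fin n, (j : ℕ) = i + 1 → 0 < P i j)
    (hdown : ∀ i j : Fin n, (i : ℕ) = j + 1 → 0 < P i j) :
    ∀ t (i j : Fin n), (i : ℕ) ≤ j + t → (j : ℕ) ≤ i + t → 0 < kpow P t i j
  | 0, i, j, h₁, h₂ => by
    rw [kpow.zero_apply, if_pos (Fin.ext (by omega))]; exact one_pos
  | t + 1, i, j, h₁, h₂ => by
    have hstep : ∀ l : Fin n, (i : ℕ) ≤ l + t → (l : ℕ) ≤ i + t → 0 < P l j →
        0 < kpow P (t + 1) i j := fun l hl₁ hl₂ hlj =>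
      (mul_pos (kpow.pos_of_le_add hP0 hdiag hup hdown t i l hl₁ hl₂) hlj).trans_le
        (kpow.mul_le_succ hP0 t i l j)
    by_cases hnear : (i : ℕ) ≤ j + t ∧ (j : ℕ) ≤ i + t
    · exact hstep j hnear.1 hnear.2 (hdiag j)
    rcases Nat.lt_or_ge (i : ℕ) j with hij | hij
    · exact hstep ⟨j - 1, by omega⟩ (by simp; omega) (by simp; omega) (hup _ j (by simp; omega))
    · exact hstep ⟨j + 1, by omega⟩ (by simp; omega) (by simp; omega) (hdown _ j rfl)

end NearestNeighbour

lemma sum_filter_le_le_pow_div {n : ℕ} {r : ℝ} (hr0 : 0 ≤ r) (hr1 : r < 1) {f : Fin n → ℝ}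
    (hf : ∀ j, f j ≤ r ^ (j : ℕ)) (k : ℕ) :
    ∑ j : Fin n with k ≤ j.val, f j ≤ r ^ k / (1 - r) :=
  calc ∑ j : Fin n with k ≤ j.val, f j ≤ ∑ j : Fin n with k ≤ j.val, r ^ (j : ℕ) :=
        Finset.sum_le_sum fun j _ => hf j
    _ = ∑ m ∈ Finset.Ico k n, r ^ m := by
        rw [Finset.sum_filter, Fin.sum_univ_eq_sum_range (fun m => if k ≤ m then r ^ m else 0),
          ← Finset.sum_filter, Finset.range_eq_Ico, Finset.Ico_filter_le, max_eq_right k.zero_le]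
    _ ≤ r ^ k / (1 - r) := geom_sum_Ico_le_of_lt_one hr0 hr1

section Qnp

variable {n : ℕ} {p : ℝ}

lemma Qnp_nonneg (hp0 : 0 ≤ p) (hp1 : p ≤ 1) (i j : Fin n) : 0 ≤ Qnp n p i j := by
  unfold Qnp; split_ifs <;> linarith

lemma Qnp_self_pos (hp0 : 0 ≤ p) (hp1 : p ≤ 1) (i : Fin n) : 0 < Qnp n p i i := by
  unfold Qnp; split_ifs <;> first | linarith | omega

lemma Qnp_of_val_eq_succ {i j : Fin n} (h : (j : ℕ) = i + 1) : Qnp n p i j = p / 2 := by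
  unfold Qnp; rw [if_pos ⟨h, h ▸ j.isLt⟩]

lemma Qnp_of_succ_eq_val {i j : Fin n} (h : (j : ℕ) + 1 = i) : Qnp n p i j = (1 - p) / 2 := by
  unfold Qnp; rw [if_neg (by omega), if_pos h]

lemma Qnp_eq_zero {i j : Fin n} (h : (i : ℕ) + 1 < j ∨ (j : ℕ) + 1 < i) : Qnp n p i j = 0 := by
  unfold Qnp; rw [if_neg (by omega), if_neg (by omega), if_neg (Fin.ne_of_val_ne (by omega))]

lemma sum_ite_val_eq (m : ℕ) (c : ℝ) :
    ∑ j : Fin n, (if (j : ℕ) = m then c else 0) = if m < n then c else 0 := by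
  rw [Fin.sum_univ_eq_sum_range (fun k => if k = m then c else 0), Finset.sum_ite_eq']
  simp only [Finset.mem_range]

lemma Qnp_sum_eq_one (hn : 2 ≤ n) (i : Fin n) : ∑ j, Qnp n p i j = 1 := by
  have hsplit : ∀ j : Fin n, Qnp n p i j =
      (if (j : ℕ) = i + 1 then p / 2 else 0) +
      (if (j : ℕ) = i - 1 then (if 0 < (i : ℕ) then (1 - p) / 2 else 0) else 0) +
      (if (j : ℕ) = i then
        (if (i : ℕ) = 0 then (2 - p) / 2 else if (i : ℕ) + 1 = n then (1 + p) / 2 else 1 / 2)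
        else 0) := by
    intro j
    have := j.isLt
    unfold Qnp
    simp only [Fin.ext_iff]
    split_ifs <;> first | ring1 | omega
  simp only [hsplit, Finset.sum_add_distrib, sum_ite_val_eq]
  have := i.isLt
  split_ifs <;> first | ring1 | omega


lemma kpow_Qnp_pos (hp0 : 0 < p) (hp1 : p < 1) (t : ℕ) (i j : Fin n)
    (h₁ : (i : ℕ) ≤ j + t) (h₂ : (j : ℕ) ≤ i + t) : 0 < kpow (Qnp n p) t i j :=
  kpow.pos_of_le_add (Qnp_nonneg hp0.le hp1.le) (Qnp_self_pos hp0.le hp1.le)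
    (fun i j h => by rw [Qnp_of_val_eq_succ h]; linarith)
    (fun i j h => by rw [Qnp_of_succ_eq_val h.symm]; linarith) t i j h₁ h₂

lemma kpow_Qnp_eq_zero_of_add_lt (t : ℕ) (i j : Fin n) (h : (j : ℕ) + t < i) :
    kpow (Qnp n p) t i j = 0 :=
  kpow.eq_zero_of_add_lt (fun _ _ h => Qnp_eq_zero (.inr h)) t i j h

lemma stationary_Qnp_le_pow {π : Fin n → ℝ} (hn : 2 ≤ n) (hp0 : 0 ≤ p) (hp1 : p < 1)
    (hπ0 : ∀ i, 0 ≤ π i) (hπ : ∑ i, π i = 1) (hstat : ∀ j, ∑ i, π i * Qnp n p i j = π j)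
    (j : Fin n) : π j ≤ (p / (1 - p)) ^ (j : ℕ) := by
  obtain ⟨k, hk⟩ := j
  induction k with
  | zero =>
    simpa [hπ] using Finset.single_le_sum (fun i _ => hπ0 i) (Finset.mem_univ (⟨0, hk⟩ : Fin n))
  | succ k ih =>
    have hbalance := detailed_balance_of_stationary (Qnp_sum_eq_one hn) hstat
      (fun i j => Qnp_eq_zero) (i := ⟨k, by omega⟩) (j := ⟨k + 1, hk⟩) rfl
    rw [Qnp_of_val_eq_succ rfl, Qnp_of_succ_eq_val rfl] at hbalance
    have h1p : 0 < 1 - p := by linarith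
    calc π ⟨k + 1, hk⟩ = p / (1 - p) * π ⟨k, by omega⟩ := by field_simp; linarith
      _ ≤ p / (1 - p) * (p / (1 - p)) ^ k :=
          mul_le_mul_of_nonneg_left (ih (by omega)) (div_nonneg hp0 h1p.le)
      _ = (p / (1 - p)) ^ (k + 1) := (pow_succ' _ _).symm

end Qnp

/-- For fixed `p ∈ (0,1/2)` there is `N` such that for all `n ≥ N`,
the mixing time of `Q_{n,p}` (with stationary distribution `π`) is at least `n/2`. -/
theorem stmt9 (p : ℝ) (hp : p ∈ Set.Ioo (0 : ℝ) (1/2)) :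
    ∃ N : ℕ, ∀ n : ℕ, N ≤ n → ∀ pi : Fin n → ℝ,
      (∀ i, 0 ≤ pi i) → (∑ i, pi i = 1) →
      (∀ j, ∑ i, pi i * Qnp n p i j = pi j) →
      (n : ℝ) / 2 ≤ (mixTime (Qnp n p) pi : ℝ) := by
  obtain ⟨hp0, hp1⟩ := hp
  set r := p / (1 - p)
  have hr0 : 0 ≤ r := div_nonneg hp0.le (by linarith)
  have hr1 : r < 1 := (div_lt_one (by linarith)).2 (by linarith)
  obtain ⟨M, hM⟩ := Filter.eventually_atTop.1 <|
    ((tendsto_pow_atTop_nhds_zero_of_lt_one hr0 hr1).div_const (1 - r)).eventually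
      (gt_mem_nhds (by rw [zero_div]; norm_num : 0 / (1 - r) < (1 / 2 : ℝ)))
  refine ⟨2 * M + 2, fun n hn π hπ0 hπ hstat => ?_⟩
  have hmixed : ∀ i, dTV (kpow (Qnp n p) (mixTime (Qnp n p) π) i) π < 1 / 4 :=
    Nat.sInf_mem <| exists_forall_dTV_kpow_lt (Qnp_nonneg hp0.le (by linarith))
      (Qnp_sum_eq_one (by omega)) hπ0 hπ hstat
      (fun i j => kpow_Qnp_pos hp0 (by linarith) (n - 1) i j (by omega) (by omega))
      (by norm_num)
  set t := mixTime (Qnp n p) π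
  by_contra! ht
  have h2t : 2 * t < n := by exact_mod_cast (by linarith : (2 * t : ℝ) < n)
  let last : Fin n := ⟨n - 1, by omega⟩
  have hfar : ∀ j ∈ ({j | ¬ n - 1 - t ≤ j.val} : Finset (Fin n)), kpow (Qnp n p) t last j = 0 :=
    fun j hj => kpow_Qnp_eq_zero_of_add_lt t last j <| by
      simp only [Finset.mem_filter, Finset.mem_univ, true_and] at hj; simp only [last]; omega
  have htail : ∑ j : Fin n with n - 1 - t ≤ j.val, π j < 1 / 2 :=
    (sum_filter_le_le_pow_div hr0 hr1
      (stationary_Qnp_le_pow (by omega) hp0.le (by linarith) hπ0 hπ hstat) _).trans_lt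
      (hM _ (by omega))
  have hsplit :=
    Finset.sum_filter_add_sum_filter_not Finset.univ (fun j : Fin n => n - 1 - t ≤ j.val) π
  have hdist := sum_le_two_mul_dTV_of_eq_zero hfar hπ0
  linarith [hmixed last]
end

section
/- Fix p ∈ (0,1/2) and for each n let μ_n be the stationary distribution of the chain Q_{n,p}. Then μ_n({i ∈ {1,…,n} : i ≤ n/3}) → 1 as n → ∞. -/
open Filter

lemma sum_two' {n : ℕ} (f : Fin n → ℝ) (a b : Fin n) (hab : a ≠ b)
    (h : ∀ i, i ≠ a → i ≠ b → f i = 0) : ∑ i, f i = f a + f b := by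
  rw [← Finset.sum_pair hab]
  refine (Finset.sum_subset (Finset.subset_univ _) (fun x _ hx => ?_)).symm
  simp only [Finset.mem_insert, Finset.mem_singleton, not_or] at hx
  exact h x hx.1 hx.2

lemma sum_three' {n : ℕ} (f : Fin n → ℝ) (a b c : Fin n) (hab : a ≠ b) (hac : a ≠ c)
    (hbc : b ≠ c)
    (h : ∀ i, i ≠ a → i ≠ b → i ≠ c → f i = 0) : ∑ i, f i = f a + f b + f c := by
  have : ({a, b, c} : Finset (Fin n)).sum f = f a + f b + f c := by
    rw [Finset.sum_insert (by simp [hab, hac]), Finset.sum_pair hbc, add_assoc]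
  rw [← this]
  refine (Finset.sum_subset (Finset.subset_univ _) (fun x _ hx => ?_)).symm
  simp only [Finset.mem_insert, Finset.mem_singleton, not_or] at hx
  exact h x hx.1 hx.2.1 hx.2.2

/-- Fix `p ∈ (0,1/2)` and for each `n ≥ 1` let `μ_n` be the stationary
distribution of `Q_{n,p}`.  Then `μ_n({i ∈ {1,…,n} : i ≤ n/3}) → 1` as `n → ∞`.
(State `i : Fin n` represents the integer `i+1`.) -/
theorem stmt11 (p : ℝ) (hp : p ∈ Set.Ioo (0 : ℝ) (1/2))
    (μ : ∀ n : ℕ, Fin n → ℝ)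
    (hμ0 : ∀ n : ℕ, 1 ≤ n → ∀ i, 0 ≤ μ n i)
    (hμ1 : ∀ n : ℕ, 1 ≤ n → ∑ i, μ n i = 1)
    (hstat : ∀ n : ℕ, 1 ≤ n → ∀ j, ∑ i, μ n i * Qnp n p i j = μ n j) :
    Filter.Tendsto
      (fun n : ℕ => ∑ i : Fin n, if ((i : ℕ) + 1 : ℝ) ≤ n / 3 then μ n i else 0)
      Filter.atTop (nhds 1) := by
  obtain ⟨hp0, hp1⟩ := hp
  have hp1' : p < 1/2 := hp1
  have h1p : (0:ℝ) < 1 - p := by linarith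
  set r : ℝ := p / (1 - p) with hr
  have hr0 : 0 < r := div_pos hp0 h1p
  have hr1 : r < 1 := (div_lt_one h1p).2 (by linarith)
  -- detailed balance
  have db : ∀ n, 1 ≤ n → ∀ k, (h : k + 1 < n) →
      μ n ⟨k, by omega⟩ * p = μ n ⟨k+1, h⟩ * (1 - p) := by
    intro n hn k
    induction k with
    | zero =>
      intro h
      have hs := hstat n hn ⟨0, by omega⟩
      rw [sum_two' _ ⟨0, by omega⟩ ⟨1, h⟩ (by simp [Fin.ext_iff])
        (fun i hia hib => ?_)] at hs
      · have h00 : Qnp n p ⟨0, by omega⟩ ⟨0, by omega⟩ = (2 - p)/2 := by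
          simp only [Qnp, Fin.val_mk, Fin.mk.injEq]
          split_ifs <;> first | rfl | omega | (simp_all; try omega)
        have h10 : Qnp n p ⟨1, h⟩ ⟨0, by omega⟩ = (1 - p)/2 := by
          simp only [Qnp, Fin.val_mk, Fin.mk.injEq]
          split_ifs <;> first | rfl | omega | (simp_all; try omega)
        rw [h00, h10] at hs
        linear_combination (-2 : ℝ) * hs
      · have hia' : (i : ℕ) ≠ 0 := fun hh => hia (Fin.ext hh)
        have hib' : (i : ℕ) ≠ 1 := fun hh => hib (Fin.ext hh)
        have hz : Qnp n p i ⟨0, by omega⟩ = 0 := by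
          simp only [Qnp, Fin.val_mk, Fin.ext_iff]
          split_ifs <;> first | rfl | omega | (simp_all; try omega)
        rw [hz, mul_zero]
    | succ k ih =>
      intro h
      have hdb := ih (by omega)
      have hs := hstat n hn ⟨k+1, by omega⟩
      rw [sum_three' _ ⟨k, by omega⟩ ⟨k+1, by omega⟩ ⟨k+2, h⟩
        (by simp [Fin.ext_iff]) (by simp [Fin.ext_iff]) (by simp [Fin.ext_iff])
        (fun i hia hib hic => ?_)] at hs
      · have hQa : Qnp n p ⟨k, by omega⟩ ⟨k+1, by omega⟩ = p/2 := by
          simp only [Qnp, Fin.val_mk, Fin.mk.injEq]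
          split_ifs <;> first | rfl | omega | (simp_all; try omega)
        have hQb : Qnp n p ⟨k+1, by omega⟩ ⟨k+1, by omega⟩ = 1/2 := by
          simp only [Qnp, Fin.val_mk, Fin.mk.injEq]
          split_ifs <;> first | rfl | omega | (simp_all; try omega)
        have hQc : Qnp n p ⟨k+2, h⟩ ⟨k+1, by omega⟩ = (1-p)/2 := by
          simp only [Qnp, Fin.val_mk, Fin.mk.injEq]
          split_ifs <;> first | rfl | omega | (simp_all; try omega)
        rw [hQa, hQb, hQc] at hs
        linear_combination (-2 : ℝ) * hs + hdb
      · have hia' : (i : ℕ) ≠ k := fun hh => hia (Fin.ext hh)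
        have hib' : (i : ℕ) ≠ k+1 := fun hh => hib (Fin.ext hh)
        have hic' : (i : ℕ) ≠ k+2 := fun hh => hic (Fin.ext hh)
        have hz : Qnp n p i ⟨k+1, by omega⟩ = 0 := by
          simp only [Qnp, Fin.val_mk, Fin.ext_iff]
          split_ifs <;> first | rfl | omega | (simp_all; try omega)
        rw [hz, mul_zero]
  -- geometric formula
  have hpow : ∀ n, (hn : 1 ≤ n) → ∀ k, (h : k < n) →
      μ n ⟨k, h⟩ = μ n ⟨0, by omega⟩ * r ^ k := by
    intro n hn k
    induction k with
    | zero => intro h; simp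
    | succ k ih =>
      intro h
      have e := db n hn k h
      rw [ih (by omega)] at e
      have h1p' : (1:ℝ) - p ≠ 0 := ne_of_gt h1p
      have : μ n ⟨k+1, h⟩ = μ n ⟨0, by omega⟩ * r ^ k * p / (1 - p) := by
        field_simp
        linarith [e]
      rw [this, pow_succ, hr]
      ring
  -- pointwise bound
  have hbound : ∀ n, (hn : 1 ≤ n) → ∀ i : Fin n, μ n i ≤ r ^ (i : ℕ) := by
    intro n hn i
    have h0le : μ n ⟨0, by omega⟩ ≤ 1 := by
      rw [← hμ1 n hn]
      exact Finset.single_le_sum (fun j _ => hμ0 n hn j) (Finset.mem_univ _)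
    have := hpow n hn (i : ℕ) i.isLt
    rw [Fin.eta] at this
    rw [this]
    calc μ n ⟨0, by omega⟩ * r ^ (i:ℕ) ≤ 1 * r ^ (i:ℕ) :=
          mul_le_mul_of_nonneg_right h0le (pow_nonneg hr0.le _)
      _ = r ^ (i:ℕ) := one_mul _
  -- tail sum
  set T : ℕ → ℝ := fun n => ∑ i : Fin n, if ((i : ℕ) + 1 : ℝ) ≤ n / 3 then 0 else μ n i
    with hT
  have hsplit : ∀ n, 1 ≤ n →
      (∑ i : Fin n, if ((i : ℕ) + 1 : ℝ) ≤ n / 3 then μ n i else 0) = 1 - T n := by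
    intro n hn
    have : (∑ i : Fin n, if ((i : ℕ) + 1 : ℝ) ≤ n / 3 then μ n i else 0) + T n
        = ∑ i, μ n i := by
      rw [hT, ← Finset.sum_add_distrib]
      refine Finset.sum_congr rfl (fun i _ => ?_)
      split_ifs <;> ring
    rw [hμ1 n hn] at this
    linarith
  -- bound on tail terms
  have hTle : ∀ n, 1 ≤ n → T n ≤ (n : ℝ) * r ^ (n / 3) := by
    intro n hn
    have : T n ≤ ∑ _i : Fin n, r ^ (n / 3) := by
      refine Finset.sum_le_sum (fun i _ => ?_)
      split_ifs with hc
      · exact pow_nonneg hr0.le _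
      · refine (hbound n hn i).trans ?_
        have hni : n / 3 ≤ (i : ℕ) := by
          push_neg at hc
          have : (n : ℝ) < 3 * ((i:ℕ) + 1) := by linarith
          have : n < 3 * ((i:ℕ) + 1) := by exact_mod_cast this
          omega
        exact pow_le_pow_of_le_one hr0.le hr1.le hni
    simpa [Finset.sum_const, Finset.card_univ, nsmul_eq_mul] using this
  have hT0 : ∀ n, 1 ≤ n → 0 ≤ T n := by
    intro n hn
    refine Finset.sum_nonneg (fun i _ => ?_)
    split_ifs
    · exact le_refl 0
    · exact hμ0 n hn i
  -- the limit
  have hdiv : Tendsto (fun n : ℕ => n / 3) atTop atTop :=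
    Filter.tendsto_atTop_atTop.2 (fun b => ⟨3 * b, fun n hn => by omega⟩)
  have habs : |r| < 1 := by rw [abs_of_pos hr0]; exact hr1
  have hg : Tendsto (fun k : ℕ => 3 * ((k:ℝ) * r ^ k) + 3 * r ^ k) atTop (nhds 0) := by
    have h1 := (tendsto_pow_const_mul_const_pow_of_abs_lt_one 1 habs).const_mul (3:ℝ)
    have h2 := (tendsto_pow_atTop_nhds_zero_of_abs_lt_one habs).const_mul (3:ℝ)
    simpa using h1.add h2
  have hgc : Tendsto (fun n : ℕ => 3 * (((n/3 : ℕ):ℝ) * r ^ (n/3)) + 3 * r ^ (n/3))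
      atTop (nhds 0) := hg.comp hdiv
  have hTlim : Tendsto T atTop (nhds 0) := by
    refine squeeze_zero' (Filter.eventually_atTop.2 ⟨1, fun n hn => hT0 n hn⟩)
      (Filter.eventually_atTop.2 ⟨1, fun n hn => ?_⟩) hgc
    refine (hTle n hn).trans ?_
    have hcard : (n : ℝ) ≤ 3 * ((n/3 : ℕ):ℝ) + 3 := by
      have : n ≤ 3 * (n/3) + 3 := by omega
      exact_mod_cast this
    have := mul_le_mul_of_nonneg_right hcard (pow_nonneg hr0.le (n/3))
    linarith [this]
  have : Tendsto (fun n : ℕ => 1 - T n) atTop (nhds 1) := by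
    simpa using (tendsto_const_nhds (x := (1:ℝ)) (f := atTop)).sub hTlim
  refine this.congr' ?_
  exact Filter.eventually_atTop.2 ⟨1, fun n hn => (hsplit n hn).symm⟩
end
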